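/- arXiv:2105.07689 — 8 statements merged into one kernel-verified Lean document; each statement's English description precedes it below -/
import Mathlib

section
/- Every simplex (i.e., every finite affinely independent set of points in a Euclidean space ℝ^d) embeds isometrically into some regular polygonal torus; that is, for every finite affinely independent set Y ⊂ ℝ^d there exist n ∈ ℕ, regular polygons T_1, …, T_n ⊂ ℝ² and a map f : Y → T_1 × ⋯ × T_n ⊆ ℝ^{2n} such that ‖f(y) − f(y')‖ = ‖y − y'‖ for all y, y' ∈ Y. -/
open scoped Classical

noncomputable section

/-- The `j`-th vertex of a regular `m`-gon in the Euclidean plane with center `c`,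
circumradius `r` and angle `θ`. -/
def polygonVertex (c : EuclideanSpace ℝ (Fin 2)) (r θ : ℝ) (m j : ℕ) :
    EuclideanSpace ℝ (Fin 2) :=
  (WithLp.equiv 2 (Fin 2 → ℝ)).symm
    ![c 0 + r * Real.cos (2 * Real.pi * j / m + θ),
      c 1 + r * Real.sin (2 * Real.pi * j / m + θ)]

/-- `T` is (the vertex set of) a regular `m`-gon of circumradius `r` in the plane. -/
def IsRegularPolygon (m : ℕ) (r : ℝ) (T : Set (EuclideanSpace ℝ (Fin 2))) : Prop :=
  2 ≤ m ∧ 0 < r ∧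
    ∃ (c : EuclideanSpace ℝ (Fin 2)) (θ : ℝ),
      T = {p | ∃ j < m, p = polygonVertex c r θ m j}

/-- The Cartesian product of `n` planar sets, viewed inside `ℝ^{2n}`. -/
def toriProduct {n : ℕ} (T : Fin n → Set (EuclideanSpace ℝ (Fin 2))) :
    Set (EuclideanSpace ℝ (Fin n × Fin 2)) :=
  {x | ∀ i : Fin n, ((WithLp.equiv 2 (Fin 2 → ℝ)).symm fun j => x (i, j)) ∈ T i}

/-!
Call `D : ι → ι → ℝ` torus-realizable if it is the squared-distance function of a map into a
product of regular polygons. Such functions are closed under sums (take the product of the tori),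
every cut semimetric is one (use a 2-gon), and every `(q a - q b) ^ 2` is a limit of them:
neighbouring vertices of a regular `k²`-gon of circumradius `k / 2π` are about `1 / k` apart on
an ever flatter circle, so sending `a` to the vertex `⌊k q a⌋` gives squared distances tending
to `(q a - q b) ^ 2` as `k → ∞`.

For an affinely independent family `p`, the Gram matrix of the lifted points `(p a, 1)` is
positive definite, so it stays positive semidefinite after subtracting `μ / 2` times the identity
for some `μ > 0`. Factoring it, the squared distances `‖p a - p b‖²` split as `μ [a ≠ b]` plus a
sum of squares `∑ i, (q i a - q i b) ^ 2`. Approximating the squares by polygons leaves a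
symmetric remainder that is uniformly close to `μ` off the diagonal, and such a function is an
explicit nonnegative combination of the cuts of singletons and of pairs.
-/

open Real Finset Filter Topology

theorem polygonVertex_apply_zero (c : EuclideanSpace ℝ (Fin 2)) (r θ : ℝ) (m j : ℕ) :
    polygonVertex c r θ m j 0 = c 0 + r * cos (2 * π * j / m + θ) := rfl

theorem polygonVertex_apply_one (c : EuclideanSpace ℝ (Fin 2)) (r θ : ℝ) (m j : ℕ) :
    polygonVertex c r θ m j 1 = c 1 + r * sin (2 * π * j / m + θ) := rfl

theorem dist_polygonVertex_sq (c : EuclideanSpace ℝ (Fin 2)) (r θ : ℝ) (m j k : ℕ) :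
    dist (polygonVertex c r θ m j) (polygonVertex c r θ m k) ^ 2 =
      (2 * r * sin (π * (j - k) / m)) ^ 2 := by
  rw [EuclideanSpace.dist_eq, sq_sqrt (by positivity), Fin.sum_univ_two, Real.dist_eq,
    Real.dist_eq, sq_abs, sq_abs, polygonVertex_apply_zero, polygonVertex_apply_zero,
    polygonVertex_apply_one, polygonVertex_apply_one, add_sub_add_left_eq_sub,
    add_sub_add_left_eq_sub, ← mul_sub, ← mul_sub, cos_sub_cos, sin_sub_sin]
  have : (2 * π * j / m + θ - (2 * π * k / m + θ)) / 2 = π * (j - k) / m := by ring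
  rw [this]
  linear_combination (4 * r ^ 2 * sin (π * (j - k) / m) ^ 2) *
    sin_sq_add_cos_sq ((2 * π * j / m + θ + (2 * π * k / m + θ)) / 2)

theorem polygonVertex_mod (c : EuclideanSpace ℝ (Fin 2)) (r θ : ℝ) (m j : ℕ) :
    polygonVertex c r θ m (j % m) = polygonVertex c r θ m j := by
  rcases Nat.eq_zero_or_pos m with rfl | hm
  · simp
  have h : 2 * π * (j : ℝ) / m + θ =
      2 * π * ((j % m : ℕ) : ℝ) / m + θ + (j / m : ℕ) * (2 * π) := by
    have hj : (j : ℝ) = (j % m : ℕ) + m * (j / m : ℕ) := by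
      exact_mod_cast (Nat.mod_add_div j m).symm
    conv_lhs => rw [hj]
    field_simp
    ring
  ext i; fin_cases i
  · simp [polygonVertex_apply_zero, h, cos_add_nat_mul_two_pi]
  · simp [polygonVertex_apply_one, h, sin_add_nat_mul_two_pi]

/-- Vertex indices `x i a` are not reduced modulo `m i`; see `polygonVertex_mod`. -/
def IsPolygonalTorusSqDist {ι : Type*} (D : ι → ι → ℝ) : Prop :=
  ∃ (n : ℕ) (m : Fin n → ℕ) (r : Fin n → ℝ) (x : Fin n → ι → ℕ),
    (∀ i, 2 ≤ m i) ∧ (∀ i, 0 < r i) ∧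
      ∀ a b, D a b = ∑ i, dist (polygonVertex 0 (r i) 0 (m i) (x i a))
        (polygonVertex 0 (r i) 0 (m i) (x i b)) ^ 2

namespace IsPolygonalTorusSqDist

variable {ι : Type*} {D D' : ι → ι → ℝ}

theorem zero : IsPolygonalTorusSqDist (0 : ι → ι → ℝ) :=
  ⟨0, finZeroElim, finZeroElim, finZeroElim, finZeroElim, finZeroElim, fun _ _ => by simp⟩

theorem add (hD : IsPolygonalTorusSqDist D) (hD' : IsPolygonalTorusSqDist D') :
    IsPolygonalTorusSqDist (D + D') := by
  obtain ⟨n, m, r, x, hm, hr, hx⟩ := hD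
  obtain ⟨n', m', r', x', hm', hr', hx'⟩ := hD'
  refine ⟨n + n', Fin.append m m', Fin.append r r', Fin.append x x',
    Fin.addCases (by simpa) (by simpa), Fin.addCases (by simpa) (by simpa), fun a b => ?_⟩
  simp [Fin.sum_univ_add, hx, hx']

theorem sum {κ : Type*} (s : Finset κ) {D : κ → ι → ι → ℝ}
    (hD : ∀ k ∈ s, IsPolygonalTorusSqDist (D k)) :
    IsPolygonalTorusSqDist (∑ k ∈ s, D k) :=
  Finset.sum_induction _ _ (fun _ _ => add) zero hD

theorem apply_comm (hD : IsPolygonalTorusSqDist D) (a b : ι) : D a b = D b a := by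
  obtain ⟨n, m, r, x, -, -, hx⟩ := hD
  simp only [hx, dist_comm]

theorem apply_self (hD : IsPolygonalTorusSqDist D) (a : ι) : D a a = 0 := by
  obtain ⟨n, m, r, x, -, -, hx⟩ := hD
  simp [hx]

end IsPolygonalTorusSqDist

theorem isPolygonalTorusSqDist_polygon {ι : Type*} {m : ℕ} {r : ℝ} (hm : 2 ≤ m) (hr : 0 < r)
    (x : ι → ℕ) :
    IsPolygonalTorusSqDist fun a b => (2 * r * sin (π * (x a - x b) / m)) ^ 2 :=
  ⟨1, fun _ => m, fun _ => r, fun _ => x, fun _ => hm, fun _ => hr,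
    fun a b => by simp [dist_polygonVertex_sq]⟩

theorem isPolygonalTorusSqDist_cut {ι : Type*} (P : ι → Prop) [DecidablePred P] {c : ℝ}
    (hc : 0 ≤ c) : IsPolygonalTorusSqDist fun a b => if (P a ↔ P b) then 0 else c := by
  rcases hc.eq_or_lt with rfl | hc
  · convert IsPolygonalTorusSqDist.zero (ι := ι) using 1
    ext; simp
  convert isPolygonalTorusSqDist_polygon le_rfl (half_pos (sqrt_pos.2 hc))
    (fun a => if P a then 1 else 0) using 1
  ext a b
  have hsq : (2 * (√c / 2)) ^ 2 = c := by rw [mul_div_cancel₀ _ two_ne_zero, sq_sqrt hc.le]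
  by_cases ha : P a <;> by_cases hb : P b <;> simp [ha, hb, hsq, neg_div]

theorem two_mul_div_mul_sin_eq_mul_sinc {k : ℝ} (hk : k ≠ 0) (d : ℝ) :
    2 * (k / (2 * π)) * sin (π * d / k ^ 2) = d / k * sinc (π * (d / k) / k) := by
  rcases eq_or_ne d 0 with rfl | hd
  · simp
  rw [sinc_of_ne_zero (by positivity)]
  field_simp

theorem tendsto_polygon_chord_sq (y z : ℝ) (hy : 0 ≤ y) (hz : 0 ≤ z) :
    Tendsto (fun k : ℕ => (2 * (k / (2 * π)) *
        sin (π * ((⌊y * k⌋₊ : ℕ) - (⌊z * k⌋₊ : ℕ) : ℝ) / ((k ^ 2 : ℕ) : ℝ))) ^ 2)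
      atTop (𝓝 ((y - z) ^ 2)) := by
  have hfloor (w : ℝ) (hw : 0 ≤ w) : Tendsto (fun k : ℕ => (⌊w * k⌋₊ : ℝ) / k) atTop (𝓝 w) :=
    (tendsto_nat_floor_mul_div_atTop hw).comp tendsto_natCast_atTop_atTop
  have hdiff : Tendsto (fun k : ℕ => ((⌊y * k⌋₊ : ℕ) - (⌊z * k⌋₊ : ℕ) : ℝ) / k) atTop
      (𝓝 (y - z)) := by
    simpa only [sub_div] using (hfloor y hy).sub (hfloor z hz)
  have hsinc : Tendsto (fun k : ℕ => sinc (π * (((⌊y * k⌋₊ : ℕ) - (⌊z * k⌋₊ : ℕ) : ℝ) / k) / k))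
      atTop (𝓝 1) := by
    rw [← sinc_zero]
    exact continuous_sinc.continuousAt.tendsto.comp
      ((hdiff.const_mul π).div_atTop tendsto_natCast_atTop_atTop)
  have hlim := ((hdiff.mul hsinc).pow 2)
  rw [mul_one] at hlim
  refine hlim.congr' ((eventually_ne_atTop 0).mono fun k hk => ?_)
  simp only [Nat.cast_pow, two_mul_div_mul_sin_eq_mul_sinc (Nat.cast_ne_zero.2 hk)]

theorem exists_isPolygonalTorusSqDist_abs_sub_sq_lt {ι : Type*} [Finite ι] (q : ι → ℝ)
    {ε : ℝ} (hε : 0 < ε) :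
    ∃ D, IsPolygonalTorusSqDist D ∧ ∀ a b, |D a b - (q a - q b) ^ 2| < ε := by
  obtain ⟨L, hL⟩ := (Set.finite_range q).bddBelow
  have hy (a : ι) : 0 ≤ q a - L := sub_nonneg.2 (hL ⟨a, rfl⟩)
  have hclose : ∀ᶠ k : ℕ in atTop, 2 ≤ k ^ 2 ∧ ∀ a b,
      |(2 * (k / (2 * π)) * sin (π * ((⌊(q a - L) * k⌋₊ : ℕ) - (⌊(q b - L) * k⌋₊ : ℕ) : ℝ) /
        ((k ^ 2 : ℕ) : ℝ))) ^ 2 - (q a - q b) ^ 2| < ε := by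
    refine ((eventually_ge_atTop 2).mono fun k hk => by nlinarith).and
      (eventually_all.2 fun a => eventually_all.2 fun b => ?_)
    have := tendsto_polygon_chord_sq _ _ (hy a) (hy b)
    rw [sub_sub_sub_cancel_right] at this
    exact (Metric.tendsto_nhds.1 this ε hε).mono fun k hk => by rwa [Real.dist_eq] at hk
  obtain ⟨k, hk2, hk⟩ := hclose.exists
  have hk0 : (0 : ℝ) < k := by exact_mod_cast (show 0 < k by nlinarith)
  exact ⟨_, isPolygonalTorusSqDist_polygon hk2 (by positivity) fun a => ⌊(q a - L) * k⌋₊, hk⟩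

section CutSums

variable {ι : Type*} [Fintype ι] {a b : ι}

theorem sum_ite_eq_iff_eq (hab : a ≠ b) (f : ι → ℝ) :
    ∑ u, (if (a = u ↔ b = u) then 0 else f u) = f a + f b := by
  have (u : ι) : (if (a = u ↔ b = u) then 0 else f u) =
      (if a = u then f u else 0) + (if b = u then f u else 0) := by
    by_cases ha : a = u <;> by_cases hb : b = u <;> simp_all
  simp [this, sum_add_distrib]

theorem sum_ite_eq_or_eq_iff (hab : a ≠ b) {g : ι → ι → ℝ} (hsymm : ∀ u v, g u v = g v u)
    (hdiag : ∀ u, g u u = 0) :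
    ∑ uv : ι × ι, (if (a = uv.1 ∨ a = uv.2 ↔ b = uv.1 ∨ b = uv.2) then 0 else g uv.1 uv.2) =
      2 * ∑ v, g a v + 2 * ∑ v, g b v - 4 * g a b := by
  have (u v : ι) : (if (a = u ∨ a = v ↔ b = u ∨ b = v) then 0 else g u v) =
      (if a = u then g u v else 0) + (if a = v then g u v else 0) +
        (if b = u then g u v else 0) + (if b = v then g u v else 0) -
        2 * ((if a = u then if b = v then g u v else 0 else 0) +
          (if b = u then if a = v then g u v else 0 else 0)) := by
    by_cases hau : a = u <;> by_cases hav : a = v <;> by_cases hbu : b = u <;>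
      by_cases hbv : b = v <;> simp_all <;> ring
  simp only [Fintype.sum_prod_type, this, sum_add_distrib, sum_sub_distrib, ← mul_sum,
    sum_ite_irrel, sum_const_zero, sum_ite_eq, mem_univ, if_true]
  have hcol (w : ι) : ∑ u, g u w = ∑ v, g w v := sum_congr rfl fun u _ => hsymm u w
  rw [hcol a, hcol b, hsymm b a]
  ring

end CutSums

theorem isPolygonalTorusSqDist_of_abs_sub_le {ι : Type*} [Fintype ι] {S : ι → ι → ℝ}
    {μ δ : ℝ} (hδ : 0 ≤ δ) (hμ : 2 * Fintype.card ι * δ ≤ μ)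
    (hsymm : ∀ a b, S a b = S b a) (hdiag : ∀ a, S a a = 0)
    (hS : ∀ a b, a ≠ b → |S a b - μ| ≤ δ) : IsPolygonalTorusSqDist S := by
  set g : ι → ι → ℝ := fun u v => if u = v then 0 else (μ + δ - S u v) / 4 with hg_def
  -- chosen so that, off the diagonal, the row sums of `g` cancel in `hdecomp`
  set A : ι → ℝ := fun u => (μ + δ) / 2 - 2 * ∑ v, g u v with hA_def
  have hg (u v : ι) : 0 ≤ g u v ∧ g u v ≤ δ / 2 := by
    by_cases huv : u = v
    · simp only [hg_def, huv, if_true]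
      constructor <;> linarith
    · have := abs_le.1 (hS u v huv)
      simp only [hg_def, huv, if_false]
      constructor <;> linarith
  have hA (u : ι) : 0 ≤ A u := by
    have : ∑ v, g u v ≤ Fintype.card ι * (δ / 2) := by
      simpa using sum_le_sum fun v (_ : v ∈ univ) => (hg u v).2
    simp only [hA_def]
    linarith
  have hdecomp : S = (∑ u, fun a b => if (a = u ↔ b = u) then 0 else A u) +
      ∑ uv : ι × ι, fun a b =>
        if (a = uv.1 ∨ a = uv.2 ↔ b = uv.1 ∨ b = uv.2) then 0 else g uv.1 uv.2 := by
    ext a b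
    simp only [Pi.add_apply, Finset.sum_apply]
    rcases eq_or_ne a b with rfl | hab
    · simp [hdiag]
    rw [sum_ite_eq_iff_eq hab,
      sum_ite_eq_or_eq_iff hab (fun u v => by simp [hg_def, hsymm u v, eq_comm])
        (fun u => by simp [hg_def])]
    simp only [hA_def, hg_def, hab, if_false]
    ring
  rw [hdecomp]
  exact (IsPolygonalTorusSqDist.sum _ fun u _ => isPolygonalTorusSqDist_cut _ (hA u)).add
    (IsPolygonalTorusSqDist.sum _ fun uv _ => isPolygonalTorusSqDist_cut _ (hg _ _).1)

theorem AffineIndependent.exists_pos_mul_sum_sq_le {E ι : Type*} [NormedAddCommGroup E]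
    [NormedSpace ℝ E] [Fintype ι] {p : ι → E} (hp : AffineIndependent ℝ p) :
    ∃ μ > 0, ∀ w : ι → ℝ, μ * ∑ a, w a ^ 2 ≤ ‖∑ a, w a • p a‖ ^ 2 + (∑ a, w a) ^ 2 := by
  let Φ : EuclideanSpace ℝ ι →ₗ[ℝ] E × ℝ :=
    { toFun := fun w => (∑ a, w a • p a, ∑ a, w a)
      map_add' := fun w w' => by simp [add_smul, sum_add_distrib]
      map_smul' := fun c w => by simp [smul_sum, mul_sum, smul_smul] }
  have hΦ : Function.Injective Φ := by
    refine (injective_iff_map_eq_zero Φ).2 fun w hw => ?_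
    obtain ⟨hwp, hw1⟩ := Prod.mk_eq_zero.1 hw
    ext a
    exact hp.eq_zero_of_sum_eq_zero hw1 hwp a (mem_univ a)
  obtain ⟨K, hK, hΦK⟩ := Φ.injective_iff_antilipschitz.1 hΦ
  refine ⟨1 / (K : ℝ) ^ 2, by positivity, fun w => ?_⟩
  have hbound := ZeroHomClass.bound_of_antilipschitz Φ hΦK (WithLp.toLp 2 w)
  have hnorm : ‖WithLp.toLp 2 w‖ ^ 2 = ∑ a, w a ^ 2 := by
    simp [EuclideanSpace.norm_sq_eq]
  have hΦw : ‖Φ (WithLp.toLp 2 w)‖ ^ 2 ≤ ‖∑ a, w a • p a‖ ^ 2 + (∑ a, w a) ^ 2 := by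
    change (max ‖∑ a, w a • p a‖ ‖∑ a, w a‖) ^ 2 ≤ _
    rw [Real.norm_eq_abs, max_def]
    split_ifs <;> nlinarith [sq_nonneg ‖∑ a, w a • p a‖, sq_abs (∑ a, w a)]
  rw [← hnorm, div_mul_eq_mul_div, one_mul, div_le_iff₀ (by positivity)]
  calc ‖WithLp.toLp 2 w‖ ^ 2 ≤ (K * ‖Φ (WithLp.toLp 2 w)‖) ^ 2 := by gcongr
    _ ≤ _ := by rw [mul_pow, mul_comm]; gcongr

open Matrix in
theorem AffineIndependent.exists_dist_sq_eq_add_sum_sq {E ι : Type*} [NormedAddCommGroup E]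
    [InnerProductSpace ℝ E] [Fintype ι] {p : ι → E} (hp : AffineIndependent ℝ p) :
    ∃ μ > 0, ∃ (k : ℕ) (v : Fin k → ι → ℝ), ∀ a b,
      dist (p a) (p b) ^ 2 = (if a = b then 0 else μ) + ∑ i, (v i a - v i b) ^ 2 := by
  obtain ⟨μ, hμ, hcoer⟩ := hp.exists_pos_mul_sum_sq_le
  let G : Matrix ι ι ℝ :=
    of fun a b => inner ℝ (p a) (p b) + 1 - if a = b then μ / 2 else 0
  have hG : G.PosSemidef := by
    refine .of_dotProduct_mulVec_nonneg ?_ fun w => ?_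
    · ext a b
      simp [G, real_inner_comm, eq_comm]
    have hquad : star w ⬝ᵥ G *ᵥ w =
        ‖∑ a, w a • p a‖ ^ 2 + (∑ a, w a) ^ 2 - μ / 2 * ∑ a, w a ^ 2 := by
      rw [← real_inner_self_eq_norm_sq, sq, sum_mul_sum, mul_sum]
      simp only [sum_inner, inner_sum, real_inner_smul_left, real_inner_smul_right,
        dotProduct, mulVec, star_trivial, G, of_apply, mul_sum, ← sum_sub_distrib,
        ← sum_add_distrib]
      refine sum_congr rfl fun a _ => ?_
      have hdiag : ∑ b, w a * ((if a = b then μ / 2 else 0) * w b) = μ / 2 * w a ^ 2 := by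
        simp only [ite_mul, zero_mul, mul_ite, mul_zero, sum_ite_eq, mem_univ, if_true]
        ring
      rw [← hdiag, ← sum_sub_distrib]
      refine sum_congr rfl fun b _ => ?_
      rw [real_inner_comm]
      ring
    rw [hquad]
    nlinarith [hcoer w, sum_nonneg fun a (_ : a ∈ univ) => sq_nonneg (w a)]
  obtain ⟨k, v, hv⟩ := Matrix.posSemidef_iff_eq_sum_vecMulVec.1 hG
  have hGv (a b : ι) : G a b = ∑ i, v i a * v i b := by
    rw [hv]
    simp [Matrix.sum_apply, vecMulVec_apply]
  refine ⟨μ, hμ, k, v, fun a b => ?_⟩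
  rcases eq_or_ne a b with rfl | hab
  · simp
  have hsum : ∑ i, (v i a - v i b) ^ 2 = G a a + G b b - 2 * G a b := by
    simp only [hGv, mul_sum, ← sum_add_distrib, ← sum_sub_distrib]
    exact sum_congr rfl fun i _ => by ring
  rw [hsum, dist_eq_norm, ← real_inner_self_eq_norm_sq]
  simp only [G, of_apply, hab, if_true, if_false, inner_sub_left, inner_sub_right,
    real_inner_comm (p a) (p b)]
  ring

theorem exists_isPolygonalTorusSqDist_abs_sub_sum_sq_le {ι κ : Type*} [Finite ι] [Fintype κ]
    (v : κ → ι → ℝ) {ε : ℝ} (hε : 0 < ε) :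
    ∃ D, IsPolygonalTorusSqDist D ∧ ∀ a b, |D a b - ∑ i, (v i a - v i b) ^ 2| ≤ ε := by
  have hε' : 0 < ε / (Fintype.card κ + 1) := by positivity
  choose D hD hDv using fun i => exists_isPolygonalTorusSqDist_abs_sub_sq_lt (v i) hε'
  refine ⟨∑ i, D i, IsPolygonalTorusSqDist.sum _ fun i _ => hD i, fun a b => ?_⟩
  calc |(∑ i, D i) a b - ∑ i, (v i a - v i b) ^ 2|
      = |∑ i, (D i a b - (v i a - v i b) ^ 2)| := by simp [sum_sub_distrib]
    _ ≤ ∑ i, |D i a b - (v i a - v i b) ^ 2| := abs_sum_le_sum_abs _ _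
    _ ≤ ∑ _i : κ, ε / (Fintype.card κ + 1) := sum_le_sum fun i _ => (hDv i a b).le
    _ ≤ ε := by
      rw [sum_const, card_univ, nsmul_eq_mul, mul_div_assoc', div_le_iff₀ (by positivity)]
      nlinarith

theorem AffineIndependent.isPolygonalTorusSqDist {E ι : Type*} [NormedAddCommGroup E]
    [InnerProductSpace ℝ E] [Fintype ι] {p : ι → E} (hp : AffineIndependent ℝ p) :
    IsPolygonalTorusSqDist fun a b => dist (p a) (p b) ^ 2 := by
  obtain ⟨μ, hμ, k, v, hpv⟩ := hp.exists_dist_sq_eq_add_sum_sq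
  set δ := μ / (2 * Fintype.card ι + 1)
  have hδ : 0 < δ := by positivity
  obtain ⟨D, hD, hDv⟩ := exists_isPolygonalTorusSqDist_abs_sub_sum_sq_le v hδ
  have hrest : IsPolygonalTorusSqDist fun a b => dist (p a) (p b) ^ 2 - D a b := by
    refine isPolygonalTorusSqDist_of_abs_sub_le (μ := μ) hδ.le ?_
      (fun a b => by rw [dist_comm, hD.apply_comm]) (fun a => by simp [hD.apply_self])
      fun a b hab => ?_
    · have : (2 * Fintype.card ι + 1 : ℝ) * δ = μ := mul_div_cancel₀ _ (by positivity)
      linarith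
    · rw [hpv, if_neg hab, abs_sub_comm]
      convert hDv a b using 2
      ring
  convert hrest.add hD using 1
  ext a b
  simp

def torusPoint {n : ℕ} (u : Fin n → EuclideanSpace ℝ (Fin 2)) :
    EuclideanSpace ℝ (Fin n × Fin 2) :=
  WithLp.toLp 2 fun ij => u ij.1 ij.2

theorem torusPoint_mem_toriProduct {n : ℕ} {T : Fin n → Set (EuclideanSpace ℝ (Fin 2))}
    {u : Fin n → EuclideanSpace ℝ (Fin 2)} (hu : ∀ i, u i ∈ T i) :
    torusPoint u ∈ toriProduct T :=
  hu

theorem dist_torusPoint_sq {n : ℕ} (u u' : Fin n → EuclideanSpace ℝ (Fin 2)) :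
    dist (torusPoint u) (torusPoint u') ^ 2 = ∑ i, dist (u i) (u' i) ^ 2 := by
  simp_rw [EuclideanSpace.dist_eq, sq_sqrt (sum_nonneg fun _ _ => sq_nonneg _),
    Fintype.sum_prod_type]
  rfl

/-- Every simplex (finite affinely independent set in `ℝ^d`) embeds isometrically
into a regular polygonal torus. -/
theorem simplex_embeds_into_regular_polygonal_torus
    (d : ℕ) (Y : Set (EuclideanSpace ℝ (Fin d))) (hYfin : Y.Finite)
    (hYind : AffineIndependent ℝ ((↑) : Y → EuclideanSpace ℝ (Fin d))) :
    ∃ (n : ℕ) (T : Fin n → Set (EuclideanSpace ℝ (Fin 2))),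
      (∀ i, ∃ m r, IsRegularPolygon m r (T i)) ∧
      ∃ f : Y → EuclideanSpace ℝ (Fin n × Fin 2),
        (∀ y, f y ∈ toriProduct T) ∧
        ∀ y y' : Y, dist (f y) (f y') = dist (y : EuclideanSpace ℝ (Fin d)) y' := by
  have := hYfin.fintype
  obtain ⟨n, m, r, x, hm, hr, hx⟩ := hYind.isPolygonalTorusSqDist
  refine ⟨n, fun i => {p | ∃ j < m i, p = polygonVertex 0 (r i) 0 (m i) j},
    fun i => ⟨m i, r i, hm i, hr i, 0, 0, rfl⟩,
    fun y => torusPoint fun i => polygonVertex 0 (r i) 0 (m i) (x i y % m i),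
    fun y => torusPoint_mem_toriProduct fun i => ⟨_, Nat.mod_lt _ (by linarith [hm i]), rfl⟩,
    fun y y' => ?_⟩
  rw [← sq_eq_sq₀ dist_nonneg dist_nonneg, dist_torusPoint_sq]
  simpa only [polygonVertex_mod] using (hx y y').symm
end
end

section
/- Let Δ = {x_1, …, x_n} be a regular simplex with side length α > 0 (all pairwise distances between the n distinct points equal α). Then for every integer m ≥ 2 there exists r > 0 such that Δ embeds isometrically into the n-fold product T_{m,r}^n ⊆ ℝ^{2n}, where T_{m,r} ⊂ ℝ² is a regular m-gon of circumradius r. (Explicitly, choosing r so that the side length of T_{m,r} is α/√2, and letting p, p' be two adjacent vertices of T_{m,r}, the points x̃_i whose i-th coordinate is p and all other coordinates are p' satisfy ‖x̃_i − x̃_{i'}‖ = α for all i ≠ i'.) -/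
open scoped Classical

noncomputable section

/-! Two adjacent vertices `p`, `q` of a regular `m`-gon of circumradius `r` are at distance
`2 r sin (π / m)`; choose `r` so that this is `α / √2`. Send `x i` to the point of `(ℝ²)ⁿ` whose
`i`-th block is `p` and whose other blocks are `q`: two such points differ in exactly two blocks,
by `±(p - q)` each, so they are `√2 · dist p q = α` apart. -/

open Real

theorem sin_pi_div_natCast_nonneg (m : ℕ) : 0 ≤ sin (π / m) := by
  rcases m.eq_zero_or_pos with rfl | hm
  · simp
  · exact sin_nonneg_of_nonneg_of_le_pi (by positivity) (div_le_self pi_pos.le (by exact_mod_cast hm))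

theorem dist_polygonVertex_succ (c : EuclideanSpace ℝ (Fin 2)) (r θ : ℝ) (m j : ℕ) :
    dist (polygonVertex c r θ m j) (polygonVertex c r θ m (j + 1)) = 2 * |r| * sin (π / m) := by
  have hchord : 0 ≤ 2 * |r| * sin (π / m) := by have := sin_pi_div_natCast_nonneg m; positivity
  set t := 2 * π * j / m + θ + π / m
  have hj : 2 * π * j / m + θ = t - π / m := by ring
  have hj' : 2 * π * ↑(j + 1) / m + θ = t + π / m := by push_cast; ring
  rw [EuclideanSpace.dist_eq, Fin.sum_univ_two, ← sqrt_sq hchord]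
  congr 1
  simp only [polygonVertex, WithLp.equiv_symm_apply, Real.dist_eq, sq_abs, hj, hj',
    Matrix.cons_val_zero, Matrix.cons_val_one, Matrix.cons_val_fin_one, add_sub_add_left_eq_sub,
    cos_sub, cos_add, sin_sub, sin_add, mul_pow, sq_abs]
  linear_combination (4 * r ^ 2 * sin (π / m) ^ 2) * sin_sq_add_cos_sq t

section Blocks

variable {ι κ : Type*} [Fintype ι] [Fintype κ]

theorem dist_toLp_blocks (u v : ι → EuclideanSpace ℝ κ) :
    dist (WithLp.toLp 2 fun k : ι × κ => u k.1 k.2) (WithLp.toLp 2 fun k : ι × κ => v k.1 k.2) =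
      sqrt (∑ a, dist (u a) (v a) ^ 2) := by
  simp only [EuclideanSpace.dist_eq, Fintype.sum_prod_type]
  congr 1
  refine Finset.sum_congr rfl fun a _ => ?_
  rw [sq_sqrt (by positivity)]

variable [DecidableEq ι]

def updateBlock (q : EuclideanSpace ℝ κ) (i : ι) (p : EuclideanSpace ℝ κ) :
    EuclideanSpace ℝ (ι × κ) :=
  WithLp.toLp 2 fun k => Function.update (fun _ => q) i p k.1 k.2

theorem dist_updateBlock_updateBlock (p q : EuclideanSpace ℝ κ) {i i' : ι} (h : i ≠ i') :
    dist (updateBlock q i p) (updateBlock q i' p) = √2 * dist p q := by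
  have hsum : ∑ a, dist (Function.update (fun _ => q) i p a) (Function.update (fun _ => q) i' p a) ^ 2
      = 2 * dist p q ^ 2 := by
    rw [Finset.sum_eq_add i i' h (fun a _ ha => by simp [ha.1, ha.2]) (by simp) (by simp)]
    simp only [Function.update_self, Function.update_of_ne h, Function.update_of_ne h.symm,
      dist_comm q p]
    ring
  rw [updateBlock, updateBlock, dist_toLp_blocks, hsum, sqrt_mul zero_le_two, sqrt_sq dist_nonneg]

end Blocks

theorem updateBlock_mem_toriProduct {n : ℕ} {T : Set (EuclideanSpace ℝ (Fin 2))}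
    {p q : EuclideanSpace ℝ (Fin 2)} (hp : p ∈ T) (hq : q ∈ T) (i : Fin n) :
    updateBlock q i p ∈ toriProduct fun _ => T := by
  intro a
  rcases eq_or_ne a i with rfl | ha
  · simpa [updateBlock] using hp
  · simpa [updateBlock, ha] using hq

theorem regular_simplex_embeds_into_regular_torus_general
    (n d : ℕ) (x : Fin n → EuclideanSpace ℝ (Fin d)) (α : ℝ) (hα : 0 < α)
    (hdist : ∀ i i', i ≠ i' → dist (x i) (x i') = α)
    (m : ℕ) (hm : 2 ≤ m) :
    ∃ r > 0, ∃ T : Set (EuclideanSpace ℝ (Fin 2)),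
      IsRegularPolygon m r T ∧
      ∃ f : Fin n → EuclideanSpace ℝ (Fin n × Fin 2),
        (∀ i, f i ∈ toriProduct fun _ => T) ∧
        ∀ i i', dist (f i) (f i') = dist (x i) (x i') := by
  have hsin : 0 < sin (π / m) := sin_pos_of_pos_of_lt_pi (by positivity)
    (div_lt_self pi_pos (by exact_mod_cast hm))
  set r := α / (2 * √2 * sin (π / m))
  have hr : 0 < r := by positivity
  set T := {p | ∃ j < m, p = polygonVertex 0 r 0 m j}
  set p := polygonVertex 0 r 0 m 0
  set q := polygonVertex 0 r 0 m 1
  have hpq : √2 * dist p q = α := by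
    rw [dist_polygonVertex_succ, abs_of_pos hr]
    simp only [r]
    field_simp
  refine ⟨r, hr, T, ⟨hm, hr, 0, 0, rfl⟩, fun i => updateBlock q i p,
    updateBlock_mem_toriProduct ⟨0, by omega, rfl⟩ ⟨1, by omega, rfl⟩, fun i i' => ?_⟩
  rcases eq_or_ne i i' with rfl | h
  · simp
  · rw [dist_updateBlock_updateBlock p q h, hpq, hdist i i' h]

/-- Every regular simplex of side length `α` embeds isometrically, for every `m ≥ 2`,
into the `n`-fold product of a regular `m`-gon of a suitable circumradius `r`. -/
theorem regular_simplex_embeds_into_regular_torus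
    (n d : ℕ) (x : Fin n → EuclideanSpace ℝ (Fin d)) (α : ℝ) (hα : 0 < α)
    (hinj : Function.Injective x)
    (hdist : ∀ i i', i ≠ i' → dist (x i) (x i') = α)
    (m : ℕ) (hm : 2 ≤ m) :
    ∃ r > 0, ∃ T : Set (EuclideanSpace ℝ (Fin 2)),
      IsRegularPolygon m r T ∧
      ∃ f : Fin n → EuclideanSpace ℝ (Fin n × Fin 2),
        (∀ i, f i ∈ toriProduct fun _ => T) ∧
        ∀ i i', dist (f i) (f i') = dist (x i) (x i') :=
  regular_simplex_embeds_into_regular_torus_general n d x α hα hdist m hm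
end
end

section
/- Let A = (α_{ij})_{i,j∈[n]} be a real symmetric n × n matrix with α_{ii} = 0 for all i and α_{ij} > 0 for all i ≠ j, let α_max = max_{i,j} α_{ij}, and suppose that ∑_{1 ≤ i < j ≤ n} (α_max² − α_{ij}²) < α_max². Then there exist ℓ ≤ n(n−1)/2, regular simplices Δ_1, …, Δ_ℓ (each a finite set of points in some Euclidean space with all pairwise distances equal), and points z_1, …, z_n in the Cartesian product ∏_{l=1}^ℓ Δ_l such that {z_1, …, z_n} is affinely independent and ‖z_i − z_j‖ = α_{ij} for every i, j ∈ [n]. -/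
/-!
For each pair `a < b` of indices glue vertex `b` of the standard simplex on `Fin n` onto vertex
`a`; this leaves a regular simplex, scaled in factor `p = (a, b)` to squared edge length `s p`.
Put `z k` at vertex `k` in every factor. Then `‖z i - z j‖² = ∑_{p ≠ (i, j)} s p`, and the system
`∑_{p ≠ q} s p = α_q²` is solved by `s q = S - α_q²` with `S = (∑ α_p²) / (N - 1)`,
`N = n.choose 2`; the hypothesis on `α_max` says exactly that `S > α_max²`, so all `s q > 0`.
In a factor whose pair avoids `k`, the point `z k` is alone on its vertex, which gives linear and
hence affine independence. For `n = 2` a single simplex suffices, and `n ≤ 1` is trivial.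
-/

open scoped Classical

noncomputable section

theorem linearIndependent_of_forall_exists_dual {R M ι : Type*} [Ring R] [NoZeroDivisors R]
    [AddCommGroup M] [Module R M] {v : ι → M}
    (h : ∀ i, ∃ φ : M →ₗ[R] R, φ (v i) ≠ 0 ∧ ∀ j ≠ i, φ (v j) = 0) :
    LinearIndependent R v := by
  rw [linearIndependent_iff']
  intro s g hg i hi
  obtain ⟨φ, hφi, hφj⟩ := h i
  have := congrArg φ hg
  rw [map_sum, map_zero, Finset.sum_eq_single_of_mem i hi fun j _ hji => by
    rw [map_smul, hφj j hji, smul_zero], map_smul, smul_eq_mul] at this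
  exact (mul_eq_zero.1 this).resolve_right hφi

theorem EuclideanSpace.dist_single_single_sq {V : Type*} [Fintype V] [DecidableEq V] {a b : V}
    (hab : a ≠ b) (r : ℝ) :
    dist (EuclideanSpace.single a r) (EuclideanSpace.single b r) ^ 2 = 2 * r ^ 2 := by
  rw [dist_eq_norm, norm_sub_sq_real, EuclideanSpace.inner_single_left, PiLp.single_apply,
    if_neg hab, mul_zero, mul_zero, sub_zero, PiLp.norm_single, PiLp.norm_single,
    Real.norm_eq_abs, sq_abs]
  ring

theorem EuclideanSpace.pairwise_dist_range_single {κ V : Type*} [Fintype V] [DecidableEq V]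
    (g : κ → V) (r : ℝ) :
    (Set.range fun k => EuclideanSpace.single (g k) r).Pairwise
      fun p q => dist p q = √2 * |r| := by
  rintro _ ⟨a, rfl⟩ _ ⟨b, rfl⟩ hab
  have hg : g a ≠ g b := fun h => hab (by simp only [h])
  rw [← Real.sqrt_sq dist_nonneg, EuclideanSpace.dist_single_single_sq hg,
    Real.sqrt_mul zero_le_two, Real.sqrt_sq_eq_abs]

section SinglesPoint

variable {ι κ V : Type*} [Fintype V] [DecidableEq V]

def singlesPoint (f : ι → κ → V) (r : ι → ℝ) (k : κ) :
    PiLp 2 fun _ : ι => EuclideanSpace ℝ V :=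
  WithLp.toLp 2 fun l => EuclideanSpace.single (f l k) (r l)

theorem dist_singlesPoint_sq [Fintype ι] (f : ι → κ → V) (r : ι → ℝ) (i j : κ) :
    dist (singlesPoint f r i) (singlesPoint f r j) ^ 2 =
      ∑ l, if f l i = f l j then 0 else 2 * r l ^ 2 := by
  rw [PiLp.dist_sq_eq_of_L2]
  refine Finset.sum_congr rfl fun l _ => ?_
  split_ifs with h
  · simp [singlesPoint, h]
  · exact EuclideanSpace.dist_single_single_sq h (r l)

theorem linearIndependent_singlesPoint {f : ι → κ → V} {r : ι → ℝ}
    (h : ∀ k, ∃ l, r l ≠ 0 ∧ ∀ k', f l k' = f l k → k' = k) :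
    LinearIndependent ℝ (singlesPoint f r) := by
  refine linearIndependent_of_forall_exists_dual fun k => ?_
  obtain ⟨l, hr, hk⟩ := h k
  refine ⟨(EuclideanSpace.proj (f l k) ∘L
    PiLp.proj 2 (fun _ : ι => EuclideanSpace ℝ V) l).toLinearMap, ?_, fun k' hk' => ?_⟩
  · simpa [singlesPoint] using hr
  · simpa [singlesPoint, PiLp.single_apply] using fun h => absurd (hk k' h.symm) hk'

end SinglesPoint

section

open Finset

theorem Fintype.sum_ite_eq_zero_eq_sub {ι M : Type*} [Fintype ι] [DecidableEq ι]
    [AddCommGroup M] (f : ι → M) (q : ι) : ∑ p, (if p = q then 0 else f p) = ∑ p, f p - f q := by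
  rw [sum_ite, sum_const_zero, zero_add, filter_ne', sum_erase_eq_sub (mem_univ q)]

theorem exists_pos_sum_ite_ne_eq {ι : Type*} [Fintype ι] [DecidableEq ι]
    (hι : 1 < Fintype.card ι) {x : ι → ℝ} {M : ℝ} (hx : ∀ p, x p ≤ M) (hsum : ∑ p, (M - x p) < M) :
    ∃ s : ι → ℝ, (∀ p, 0 < s p) ∧ ∀ q, ∑ p, (if p = q then 0 else s p) = x q := by
  have hN : (1 : ℝ) < Fintype.card ι := by exact_mod_cast hι
  obtain ⟨S, hS⟩ : ∃ S, S * ((Fintype.card ι : ℝ) - 1) = ∑ p, x p :=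
    ⟨_, div_mul_cancel₀ _ (by linarith)⟩
  rw [sum_sub_distrib, sum_const, card_univ, nsmul_eq_mul] at hsum
  have hMS : M < S := by nlinarith
  have hsum_S : ∑ p, (S - x p) = S := by
    rw [sum_sub_distrib, sum_const, card_univ, nsmul_eq_mul]
    linear_combination hS
  refine ⟨fun p => S - x p, fun p => by linarith [hx p], fun q => ?_⟩
  rw [Fintype.sum_ite_eq_zero_eq_sub, hsum_S, sub_sub_cancel]

end

section

open Finset

def ltPairs (n : ℕ) : Finset (Fin n × Fin n) := {x | x.1 < x.2}

theorem mem_ltPairs {n : ℕ} {p : Fin n × Fin n} : p ∈ ltPairs n ↔ p.1 < p.2 := by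
  simp [ltPairs]

theorem card_ltPairs (n : ℕ) : #(ltPairs n) = n.choose 2 := by
  unfold ltPairs
  simpa using Fintype.card_product_filter_lt (α := Fin n)

theorem sum_ltPairs {M : Type*} [AddCommMonoid M] {n : ℕ} (g : Fin n → Fin n → M) :
    ∑ p ∈ ltPairs n, g p.1 p.2 = ∑ i, ∑ j ∈ Ioi i, g i j :=
  sum_finset_product' _ _ _ (by simp [ltPairs])

theorem exists_mem_ltPairs_ne {n : ℕ} (hn : 3 ≤ n) (k : Fin n) :
    ∃ p ∈ ltPairs n, p.1 ≠ k ∧ p.2 ≠ k := by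
  have hcard : 1 < #(univ.erase k) := by
    rw [card_erase_of_mem (mem_univ k), card_univ, Fintype.card_fin]; omega
  have hne : (univ.erase k).Nonempty := card_pos.1 (by omega)
  exact ⟨((univ.erase k).min' hne, (univ.erase k).max' hne),
    by simpa [ltPairs] using min'_lt_max'_of_card _ hcard,
    ne_of_mem_erase (min'_mem _ hne), ne_of_mem_erase (max'_mem _ hne)⟩

theorem update_id_eq_update_id_iff {α : Type*} [LinearOrder α] {a b i j : α} (hab : a < b)
    (hij : i < j) : Function.update id b a i = Function.update id b a j ↔ (a, b) = (i, j) := by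
  grind [Function.update_apply]

theorem eq_of_update_id_eq_update_id {α : Type*} [DecidableEq α] {a b k k' : α} (hka : a ≠ k)
    (hkb : b ≠ k) : Function.update id b a k' = Function.update id b a k → k' = k := by
  grind [Function.update_apply]

theorem sum_ltPairs_ite_update_id {M : Type*} [AddCommMonoid M] {n : ℕ} (g : ltPairs n → M)
    {i j : Fin n} (hij : i < j) :
    ∑ p : ltPairs n, (if Function.update id p.1.2 p.1.1 i = Function.update id p.1.2 p.1.1 j
      then 0 else g p) =
    ∑ p : ltPairs n, if p = ⟨(i, j), mem_ltPairs.2 hij⟩ then 0 else g p := by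
  refine sum_congr rfl fun p _ => ?_
  simp only [update_id_eq_update_id_iff (mem_ltPairs.1 p.2) hij, Subtype.ext_iff]

end

def IsRealizedInSimplexProduct {n : ℕ} (A : Fin n → Fin n → ℝ) (ℓ : ℕ) : Prop :=
  ∃ (dims : Fin ℓ → ℕ) (Δ : (l : Fin ℓ) → Set (EuclideanSpace ℝ (Fin (dims l)))),
    (∀ l, (Δ l).Finite ∧ ∃ c > 0, (Δ l).Pairwise fun p q => dist p q = c) ∧
    ∃ z : Fin n → PiLp 2 fun l : Fin ℓ => EuclideanSpace ℝ (Fin (dims l)),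
      (∀ i l, z i l ∈ Δ l) ∧ AffineIndependent ℝ z ∧ ∀ i j, dist (z i) (z j) = A i j

theorem isRealizedInSimplexProduct_zero {n : ℕ} (hn : n ≤ 1) {A : Fin n → Fin n → ℝ}
    (hdiag : ∀ i, A i i = 0) : IsRealizedInSimplexProduct A 0 := by
  have : Subsingleton (Fin n) := Fin.subsingleton_iff_le_one.2 hn
  refine ⟨Fin.elim0, fun l => l.elim0, fun l => l.elim0, fun _ => 0, fun _ l => l.elim0,
    affineIndependent_of_subsingleton ℝ _, fun i j => ?_⟩
  rw [Subsingleton.elim i j, hdiag, dist_self]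

theorem isRealizedInSimplexProduct_of_singles {ι : Type*} [Fintype ι] {n d : ℕ}
    {A : Fin n → Fin n → ℝ} (hA : ∀ i j, 0 ≤ A i j) (f : ι → Fin n → Fin d) (r : ι → ℝ)
    (hr : ∀ l, r l ≠ 0) (hsep : ∀ k, ∃ l, ∀ k', f l k' = f l k → k' = k)
    (hdist : ∀ i j, ∑ l, (if f l i = f l j then 0 else 2 * r l ^ 2) = A i j ^ 2) :
    IsRealizedInSimplexProduct A (Fintype.card ι) := by
  set e := (Fintype.equivFin ι).symm
  refine ⟨fun _ => d, fun l => Set.range fun k => EuclideanSpace.single (f (e l) k) (r (e l)),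
    fun l => ⟨Set.finite_range _, √2 * |r (e l)|, by positivity [hr (e l)],
      EuclideanSpace.pairwise_dist_range_single _ _⟩,
    singlesPoint (fun l => f (e l)) (fun l => r (e l)), fun i l => ⟨i, rfl⟩, ?_, fun i j => ?_⟩
  · refine (linearIndependent_singlesPoint fun k => ?_).affineIndependent
    obtain ⟨l, hl⟩ := hsep k
    exact ⟨e.symm l, by simpa using hr l, by simpa using hl⟩
  · rw [← sq_eq_sq₀ dist_nonneg (hA i j), dist_singlesPoint_sq,
      e.sum_comp (fun l => if f l i = f l j then 0 else 2 * r l ^ 2), hdist]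

theorem isRealizedInSimplexProduct_two {A : Fin 2 → Fin 2 → ℝ} (hsymm : ∀ i j, A i j = A j i)
    (hdiag : ∀ i, A i i = 0) (hpos : 0 < A 0 1) : IsRealizedInSimplexProduct A 1 := by
  have hA : ∀ i j, 0 ≤ A i j := by
    intro i j; fin_cases i <;> fin_cases j <;> simp [hdiag, hsymm 1 0, hpos.le]
  simpa using isRealizedInSimplexProduct_of_singles (ι := Unit) hA (fun _ => id)
    (fun _ => A 0 1 / √2) (fun _ => by positivity) (fun k => ⟨(), fun _ => id⟩) fun i j => by
      fin_cases i <;> fin_cases j <;> simp [hdiag, hsymm 1 0, div_pow] <;> ring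

theorem isRealizedInSimplexProduct_of_three_le {n : ℕ} (hn : 3 ≤ n) {A : Fin n → Fin n → ℝ}
    {αmax : ℝ} (hsymm : ∀ i j, A i j = A j i) (hdiag : ∀ i, A i i = 0)
    (hpos : ∀ i j, i ≠ j → 0 < A i j) (hub : ∀ i j, A i j ≤ αmax)
    (hsum : ∑ i : Fin n, ∑ j ∈ Finset.Ioi i, (αmax ^ 2 - A i j ^ 2) < αmax ^ 2) :
    IsRealizedInSimplexProduct A (n.choose 2) := by
  have hcard : Fintype.card (ltPairs n) = n.choose 2 := by
    rw [Fintype.card_coe, card_ltPairs]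
  have hA : ∀ i j, 0 ≤ A i j := fun i j => by
    rcases eq_or_ne i j with rfl | hij
    exacts [(hdiag i).ge, (hpos i j hij).le]
  obtain ⟨s, hs_pos, hs⟩ := exists_pos_sum_ite_ne_eq (ι := ltPairs n)
    (x := fun p => A p.1.1 p.1.2 ^ 2) (M := αmax ^ 2)
    (by rw [hcard]; exact (Nat.choose_le_choose 2 hn).trans_lt' (by norm_num))
    (fun p => pow_le_pow_left₀ (hA _ _) (hub _ _) 2)
    (by rwa [Finset.sum_coe_sort (ltPairs n) fun p => αmax ^ 2 - A p.1 p.2 ^ 2,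
      sum_ltPairs fun i j => αmax ^ 2 - A i j ^ 2])
  have hside : ∀ p, 2 * √(s p / 2) ^ 2 = s p := fun p => by
    rw [Real.sq_sqrt (half_pos (hs_pos p)).le]; ring
  have hdist_lt : ∀ i j, i < j → ∑ p : ltPairs n,
      (if Function.update id p.1.2 p.1.1 i = Function.update id p.1.2 p.1.1 j then 0
        else 2 * √(s p / 2) ^ 2) = A i j ^ 2 := fun i j hij => by
    simp only [sum_ltPairs_ite_update_id _ hij, hside]
    exact hs _
  rw [← hcard]
  -- in the factor of `p`, `Function.update id p.2 p.1` glues vertex `p.2` onto vertex `p.1`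
  refine isRealizedInSimplexProduct_of_singles hA (fun p => Function.update id p.1.2 p.1.1)
    (fun p => √(s p / 2)) (fun p => (Real.sqrt_pos.2 (half_pos (hs_pos p))).ne')
    (fun k => ?_) fun i j => ?_
  · obtain ⟨p, hp, hk₁, hk₂⟩ := exists_mem_ltPairs_ne hn k
    exact ⟨⟨p, hp⟩, fun k' => eq_of_update_id_eq_update_id hk₁ hk₂⟩
  · rcases lt_trichotomy i j with hij | rfl | hij
    · exact hdist_lt i j hij
    · simp [hdiag]
    · simp only [eq_comm (a := Function.update id _ _ i), hsymm i j]
      exact hdist_lt j i hij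

theorem almost_regular_matrix_realized_in_product_of_regular_simplices_general
    (n : ℕ) (A : Fin n → Fin n → ℝ) (αmax : ℝ)
    (hsymm : ∀ i j, A i j = A j i)
    (hdiag : ∀ i, A i i = 0)
    (hpos : ∀ i j, i ≠ j → 0 < A i j)
    (hub : ∀ i j, A i j ≤ αmax)
    (hsum : ∑ i : Fin n, ∑ j ∈ Finset.Ioi i, (αmax ^ 2 - A i j ^ 2) < αmax ^ 2) :
    ∃ (ℓ : ℕ) (_ : ℓ ≤ n.choose 2) (dims : Fin ℓ → ℕ)
      (Δ : (l : Fin ℓ) → Set (EuclideanSpace ℝ (Fin (dims l)))),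
      (∀ l, (Δ l).Finite ∧ ∃ c > 0, (Δ l).Pairwise fun p q => dist p q = c) ∧
      ∃ z : Fin n → PiLp 2 fun l : Fin ℓ => EuclideanSpace ℝ (Fin (dims l)),
        (∀ i l, z i l ∈ Δ l) ∧
        AffineIndependent ℝ z ∧
        ∀ i j, dist (z i) (z j) = A i j := by
  obtain hn | rfl | hn := lt_trichotomy n 2
  · exact ⟨0, Nat.zero_le _, isRealizedInSimplexProduct_zero (by omega) hdiag⟩
  · exact ⟨1, le_rfl, isRealizedInSimplexProduct_two hsymm hdiag (hpos 0 1 (by decide))⟩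
  · exact ⟨_, le_rfl, isRealizedInSimplexProduct_of_three_le hn hsymm hdiag hpos hub hsum⟩

/-- An almost regular matrix is realized from an affinely independent subset of a
product of at most `n(n-1)/2` regular simplices. -/
theorem almost_regular_matrix_realized_in_product_of_regular_simplices
    (n : ℕ) (A : Fin n → Fin n → ℝ) (αmax : ℝ)
    (hsymm : ∀ i j, A i j = A j i)
    (hdiag : ∀ i, A i i = 0)
    (hpos : ∀ i j, i ≠ j → 0 < A i j)
    (hub : ∀ i j, A i j ≤ αmax)
    (hattained : ∃ i j, A i j = αmax)
    (hsum : ∑ i : Fin n, ∑ j ∈ Finset.Ioi i, (αmax ^ 2 - A i j ^ 2) < αmax ^ 2) :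
    ∃ (ℓ : ℕ) (_ : ℓ ≤ n.choose 2) (dims : Fin ℓ → ℕ)
      (Δ : (l : Fin ℓ) → Set (EuclideanSpace ℝ (Fin (dims l)))),
      (∀ l, (Δ l).Finite ∧ ∃ c > 0, (Δ l).Pairwise fun p q => dist p q = c) ∧
      ∃ z : Fin n → PiLp 2 fun l : Fin ℓ => EuclideanSpace ℝ (Fin (dims l)),
        (∀ i l, z i l ∈ Δ l) ∧
        AffineIndependent ℝ z ∧
        ∀ i j, dist (z i) (z j) = A i j :=
  almost_regular_matrix_realized_in_product_of_regular_simplices_general n A αmax hsymm hdiag hpos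
    hub hsum
end
end

section
/- For every δ > 0 and every finite set X ⊂ ℝ^k there exist m ∈ ℕ (m ≥ 2) and r > 0 such that X is δ-embeddable into the (m,r)-regular polygonal torus T_{m,r}^k ⊆ ℝ^{2k}; that is, there exists an injection f : X → T_{m,r}^k with | ‖f(x) − f(x')‖² − ‖x − x'‖² | < δ for all x, x' ∈ X, where T_{m,r} ⊂ ℝ² is a regular m-gon of circumradius r. -/
open scoped Classical

noncomputable section

private lemma chordSq (r α β : ℝ) :
    (r * Real.cos α - r * Real.cos β) ^ 2 + (r * Real.sin α - r * Real.sin β) ^ 2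
      = 2 * r ^ 2 * (1 - Real.cos (α - β)) := by
  rw [Real.cos_sub]
  linear_combination r ^ 2 * Real.sin_sq_add_cos_sq α + r ^ 2 * Real.sin_sq_add_cos_sq β

private lemma coordBound (η C r e Δ b : ℝ) (hη : 0 < η) (hC : 0 ≤ C)
    (hr : 2 * C + 2 ≤ r) (hr2 : 2 * (2 * C + 2) ^ 4 ≤ η * r ^ 2)
    (he : 0 < e) (he1 : e ≤ 1) (heη : e * (16 * C + 8) ≤ η)
    (hb : |b| ≤ 2 * C) (hab : |r * Δ - b| ≤ 2 * e) :
    |2 * r ^ 2 * (1 - Real.cos Δ) - b ^ 2| ≤ η := by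
  have hr0 : 0 < r := lt_of_lt_of_le (by linarith) hr
  have hrΔ : |r * Δ| ≤ 2 * C + 2 := by
    calc |r * Δ| = |b + (r * Δ - b)| := by ring_nf
      _ ≤ |b| + |r * Δ - b| := abs_add_le _ _
      _ ≤ 2 * C + 2 := by linarith
  have hΔ1 : |Δ| ≤ 1 := by
    rw [abs_mul, abs_of_pos hr0] at hrΔ
    nlinarith [abs_nonneg Δ]
  have h1 := Real.cos_bound hΔ1
  have habs4 : |Δ| ^ 4 = Δ ^ 4 := by
    rw [← abs_pow]; exact abs_of_nonneg (by positivity)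
  rw [habs4] at h1
  obtain ⟨hl, hu⟩ := abs_le.mp h1
  -- bound on r^2 * Δ^4
  have h4 : (r * Δ) ^ 4 ≤ (2 * C + 2) ^ 4 := by
    calc (r * Δ) ^ 4 = |r * Δ| ^ 4 :=
          ((abs_of_nonneg (by positivity : (0:ℝ) ≤ (r * Δ) ^ 4)).symm.trans (abs_pow _ _))
      _ ≤ (2 * C + 2) ^ 4 := pow_le_pow_left₀ (abs_nonneg _) hrΔ 4
  have h5 : 2 * r ^ 2 * Δ ^ 4 * r ^ 2 ≤ η * r ^ 2 := by nlinarith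
  have h6 : 2 * r ^ 2 * Δ ^ 4 ≤ η := le_of_mul_le_mul_right h5 (by positivity)
  -- bound on |r²Δ² − b²|
  have h7 : |(r * Δ) ^ 2 - b ^ 2| ≤ 2 * e * (4 * C + 2) := by
    have : (r * Δ) ^ 2 - b ^ 2 = (r * Δ - b) * (r * Δ + b) := by ring
    rw [this, abs_mul]
    have h8 : |r * Δ + b| ≤ 4 * C + 2 := by
      calc |r * Δ + b| ≤ |r * Δ| + |b| := abs_add_le _ _
        _ ≤ 4 * C + 2 := by linarith
    exact mul_le_mul hab h8 (abs_nonneg _) (by linarith)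
  obtain ⟨h7l, h7u⟩ := abs_le.mp h7
  rw [abs_le]
  constructor
  · nlinarith [sq_nonneg r, mul_le_mul_of_nonneg_left hl (by positivity : (0:ℝ) ≤ 2 * r ^ 2)]
  · nlinarith [sq_nonneg r, mul_le_mul_of_nonneg_left hu (by positivity : (0:ℝ) ≤ 2 * r ^ 2)]


set_option maxHeartbeats 1600000 in
/-- For every `δ > 0`, every finite subset of `ℝ^k` is `δ`-embeddable into the
`k`-fold product of a fixed regular `m`-gon of circumradius `r`, for suitable
`m ≥ 2` and `r > 0`. -/
theorem finite_set_delta_embeds_into_regular_torus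
    (δ : ℝ) (hδ : 0 < δ) (k : ℕ)
    (X : Set (EuclideanSpace ℝ (Fin k))) (hXfin : X.Finite) :
    ∃ (m : ℕ) (r : ℝ) (T : Set (EuclideanSpace ℝ (Fin 2))),
      2 ≤ m ∧ 0 < r ∧ IsRegularPolygon m r T ∧
      ∃ f : X → EuclideanSpace ℝ (Fin k × Fin 2),
        Function.Injective f ∧ (∀ x, f x ∈ toriProduct fun _ => T) ∧
        ∀ x x' : X,
          |dist (f x) (f x') ^ 2 - dist (x : EuclideanSpace ℝ (Fin k)) x' ^ 2| < δ := by
  classical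
  -- a uniform bound on all coordinates of points of X
  obtain ⟨C, hC0, hC⟩ : ∃ C, 0 ≤ C ∧ ∀ x ∈ X, ∀ i, |x i| ≤ C := by
    set s : Finset ℝ :=
      insert 0 ((hXfin.toFinset ×ˢ (Finset.univ : Finset (Fin k))).image fun p => |p.1 p.2|)
      with hs
    have h0s : (0:ℝ) ∈ s := Finset.mem_insert_self _ _
    refine ⟨s.max' ⟨0, h0s⟩, s.le_max' 0 h0s, fun x hx i => s.le_max' _ ?_⟩
    exact Finset.mem_insert_of_mem (Finset.mem_image.2
      ⟨(x, i), Finset.mem_product.2 ⟨hXfin.mem_toFinset.2 hx, Finset.mem_univ _⟩, rfl⟩)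
  -- a positive lower bound on squared distances of distinct points of X
  obtain ⟨d, hd0, hd⟩ : ∃ d, 0 < d ∧ ∀ x ∈ X, ∀ y ∈ X, x ≠ y → d ≤ dist x y ^ 2 := by
    by_cases hS : {p : EuclideanSpace ℝ (Fin k) × EuclideanSpace ℝ (Fin k) |
        p.1 ∈ X ∧ p.2 ∈ X ∧ p.1 ≠ p.2}.Nonempty
    · obtain ⟨p, hp, hmin⟩ := Set.exists_min_image _ (fun p => dist p.1 p.2 ^ 2)
        ((hXfin.prod hXfin).subset (fun q hq => ⟨hq.1, hq.2.1⟩)) hS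
      exact ⟨dist p.1 p.2 ^ 2, pow_pos (dist_pos.2 hp.2.2) 2,
        fun x hx y hy hxy => hmin (x, y) ⟨hx, hy, hxy⟩⟩
    · exact ⟨1, one_pos, fun x hx y hy hxy => absurd ⟨(x, y), hx, hy, hxy⟩ hS⟩
  set η : ℝ := min δ d / (k + 1) with hη_def
  have hη : 0 < η := div_pos (lt_min hδ hd0) (by positivity)
  set M : ℝ := 2 * C + 2 with hM_def
  have hM2 : (2:ℝ) ≤ M := by simp [hM_def]; linarith
  set r : ℝ := M + 2 * M ^ 4 / η with hr_def
  have hMr : M ≤ r := le_add_of_nonneg_right (by positivity)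
  have hr0 : 0 < r := lt_of_lt_of_le (by linarith) hMr
  have hr2 : 2 * M ^ 4 ≤ η * r ^ 2 := by
    have h1 : 2 * M ^ 4 / η ≤ r := le_add_of_nonneg_left (by linarith)
    calc 2 * M ^ 4 = η * (2 * M ^ 4 / η) := by field_simp
      _ ≤ η * r := mul_le_mul_of_nonneg_left h1 hη.le
      _ ≤ η * r ^ 2 := by nlinarith [mul_nonneg (mul_nonneg hη.le hr0.le) (by linarith : (0:ℝ) ≤ r - 1)]
  set e0 : ℝ := min 1 (η / (16 * C + 8)) with he0_def
  have he0 : 0 < e0 := lt_min one_pos (div_pos hη (by linarith))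
  set m : ℕ := max 2 ⌈2 * Real.pi * r / e0⌉₊ with hm_def
  have hm2 : 2 ≤ m := le_max_left _ _
  have hm0 : (0:ℝ) < (m:ℝ) := by exact_mod_cast Nat.lt_of_lt_of_le two_pos hm2
  set e : ℝ := 2 * Real.pi * r / m with he_def
  have he : 0 < e := div_pos (by positivity) hm0
  have hee0 : e ≤ e0 := by
    have h1 : 2 * Real.pi * r / e0 ≤ (m:ℝ) :=
      le_trans (Nat.le_ceil _) (by exact_mod_cast Nat.cast_le.2 (le_max_right 2 _))
    rw [div_le_iff₀ he0] at h1
    rw [he_def, div_le_iff₀ hm0]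
    linarith
  have he1 : e ≤ 1 := le_trans hee0 (min_le_left _ _)
  have heη : e * (16 * C + 8) ≤ η := by
    have h := le_trans hee0 (min_le_right _ _)
    rw [le_div_iff₀ (by linarith : (0:ℝ) < 16 * C + 8)] at h
    linarith
  have hem : e * m = 2 * Real.pi * r := by
    rw [he_def]; field_simp
  -- the vertex index of each coordinate
  set J : Fin k → X → ℕ := fun i x => (⌊((x : EuclideanSpace ℝ (Fin k)) i + C) / e⌋).toNat
    with hJ_def
  have hJfacts : ∀ (x : X) (i : Fin k),
      e * (J i x : ℝ) ≤ (x : EuclideanSpace ℝ (Fin k)) i + C ∧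
      (x : EuclideanSpace ℝ (Fin k)) i + C - e < e * (J i x : ℝ) ∧ J i x < m := by
    intro x i
    set t : ℝ := (x : EuclideanSpace ℝ (Fin k)) i with ht_def
    have htC : |t| ≤ C := hC _ x.2 i
    have ht1 : 0 ≤ t + C := by cases abs_le.mp htC; linarith
    have ht2 : t + C ≤ 2 * C := by cases abs_le.mp htC; linarith
    have hfl0 : 0 ≤ ⌊(t + C) / e⌋ := Int.floor_nonneg.2 (by positivity)
    have hcast : ((J i x : ℕ) : ℝ) = (⌊(t + C) / e⌋ : ℝ) := by
      simp only [hJ_def, ← ht_def]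
      exact_mod_cast Int.toNat_of_nonneg hfl0
    have hfl1 : (⌊(t + C) / e⌋ : ℝ) ≤ (t + C) / e := Int.floor_le _
    have hfl2 : (t + C) / e < ⌊(t + C) / e⌋ + 1 := Int.lt_floor_add_one _
    refine ⟨?_, ?_, ?_⟩
    · rw [hcast]
      calc e * (⌊(t + C) / e⌋ : ℝ) ≤ e * ((t + C) / e) := mul_le_mul_of_nonneg_left hfl1 he.le
        _ = t + C := by field_simp
    · rw [hcast]
      have := mul_lt_mul_of_pos_left hfl2 he
      calc t + C - e = e * ((t + C) / e) - e := by field_simp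
        _ < e * ((⌊(t + C) / e⌋ : ℝ) + 1) - e := by linarith
        _ = e * (⌊(t + C) / e⌋ : ℝ) := by ring
    · have h2C : 2 * C < e * m := by
        rw [hem]
        nlinarith [Real.pi_gt_three]
      have : e * (J i x : ℝ) < e * (m : ℝ) := by
        calc e * (J i x : ℝ) ≤ t + C := by
              rw [hcast]
              calc e * (⌊(t + C) / e⌋ : ℝ) ≤ e * ((t + C) / e) :=
                    mul_le_mul_of_nonneg_left hfl1 he.le
                _ = t + C := by field_simp
          _ ≤ 2 * C := ht2
          _ < e * m := h2C
      have := lt_of_mul_lt_mul_left this he.le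
      exact_mod_cast this
  -- the embedding
  set f : X → EuclideanSpace ℝ (Fin k × Fin 2) := fun x =>
    (WithLp.equiv 2 (Fin k × Fin 2 → ℝ)).symm fun p =>
      if p.2 = 0 then r * Real.cos (2 * Real.pi * (J p.1 x) / m)
      else r * Real.sin (2 * Real.pi * (J p.1 x) / m) with hf_def
  have hfapply : ∀ (x : X) (p : Fin k × Fin 2), f x p =
      if p.2 = 0 then r * Real.cos (2 * Real.pi * (J p.1 x) / m)
      else r * Real.sin (2 * Real.pi * (J p.1 x) / m) := fun x p => rfl
  -- the squared distance of images, coordinatewise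
  have hdist : ∀ x x' : X, dist (f x) (f x') ^ 2 =
      ∑ i : Fin k, 2 * r ^ 2 *
        (1 - Real.cos (2 * Real.pi * (J i x) / m - 2 * Real.pi * (J i x') / m)) := by
    intro x x'
    rw [EuclideanSpace.dist_eq, Real.sq_sqrt (Finset.sum_nonneg fun _ _ => by positivity)]
    rw [Fintype.sum_prod_type]
    refine Finset.sum_congr rfl fun i _ => ?_
    rw [Fin.sum_univ_two]
    simp only [hfapply, Real.dist_eq, sq_abs]
    norm_num
    exact chordSq r _ _
  have hdistX : ∀ x x' : X,
      dist (x : EuclideanSpace ℝ (Fin k)) (x' : EuclideanSpace ℝ (Fin k)) ^ 2 =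
      ∑ i : Fin k, ((x : EuclideanSpace ℝ (Fin k)) i - (x' : EuclideanSpace ℝ (Fin k)) i) ^ 2 := by
    intro x x'
    rw [EuclideanSpace.dist_eq, Real.sq_sqrt (Finset.sum_nonneg fun _ _ => by positivity)]
    simp [Real.dist_eq, sq_abs]
  -- the main estimate
  have hmain : ∀ x x' : X,
      |dist (f x) (f x') ^ 2 - dist (x : EuclideanSpace ℝ (Fin k)) x' ^ 2| ≤ k * η := by
    intro x x'
    rw [hdist x x', hdistX x x', ← Finset.sum_sub_distrib]
    refine le_trans (Finset.abs_sum_le_sum_abs _ _) ?_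
    have hsum : ∑ _i : Fin k, η = (k : ℝ) * η := by
      rw [Finset.sum_const, Finset.card_univ, Fintype.card_fin, nsmul_eq_mul]
    rw [← hsum]
    refine Finset.sum_le_sum fun i _ => ?_
    have hr' : 2 * C + 2 ≤ r := by rw [← hM_def]; exact hMr
    have hr2' : 2 * (2 * C + 2) ^ 4 ≤ η * r ^ 2 := by rw [← hM_def]; exact hr2
    have hbb : |(x : EuclideanSpace ℝ (Fin k)) i - (x' : EuclideanSpace ℝ (Fin k)) i| ≤ 2 * C := by
      obtain ⟨u1, u2⟩ := abs_le.mp (hC _ x.2 i)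
      obtain ⟨v1, v2⟩ := abs_le.mp (hC _ x'.2 i)
      rw [abs_le]; constructor <;> linarith
    obtain ⟨ha1, ha2, _⟩ := hJfacts x i
    obtain ⟨hb1, hb2, _⟩ := hJfacts x' i
    have habb : |r * (2 * Real.pi * (J i x : ℝ) / m - 2 * Real.pi * (J i x' : ℝ) / m)
        - ((x : EuclideanSpace ℝ (Fin k)) i - (x' : EuclideanSpace ℝ (Fin k)) i)| ≤ 2 * e := by
      have hkey : r * (2 * Real.pi * (J i x : ℝ) / m - 2 * Real.pi * (J i x' : ℝ) / m)
          - ((x : EuclideanSpace ℝ (Fin k)) i - (x' : EuclideanSpace ℝ (Fin k)) i)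
          = (e * (J i x : ℝ) - ((x : EuclideanSpace ℝ (Fin k)) i + C))
            - (e * (J i x' : ℝ) - ((x' : EuclideanSpace ℝ (Fin k)) i + C)) := by
        rw [he_def]; field_simp; ring
      rw [hkey, abs_le]; constructor <;> linarith
    exact coordBound η C r e _ _ hη hC0 hr' hr2' he he1 heη hbb habb
  have hkη : (k : ℝ) * η < min δ d := by
    have h := lt_min hδ hd0
    have hk1 : (0 : ℝ) < (k : ℝ) + 1 := by positivity
    have h2 : ((k : ℝ) + 1) * η = min δ d := by rw [hη_def]; field_simp
    nlinarith
  -- the polygon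
  refine ⟨m, r, {p | ∃ j < m, p = polygonVertex 0 r 0 m j}, hm2, hr0,
    ⟨hm2, hr0, 0, 0, rfl⟩, f, ?_, ?_, ?_⟩
  · -- injectivity
    intro x x' hxx'
    by_contra hne
    have hne' : (x : EuclideanSpace ℝ (Fin k)) ≠ (x' : EuclideanSpace ℝ (Fin k)) :=
      fun h => hne (Subtype.ext h)
    have h1 := hd _ x.2 _ x'.2 hne'
    have h2 := hmain x x'
    rw [hxx', dist_self] at h2
    rw [zero_pow (by norm_num), zero_sub, abs_neg,
      abs_of_nonneg (by positivity : (0:ℝ) ≤ dist (x : EuclideanSpace ℝ (Fin k)) x' ^ 2)] at h2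
    have h4 := lt_of_lt_of_le hkη (min_le_right _ _)
    linarith
  · -- membership in the torus
    intro x i
    refine ⟨J i x, (hJfacts x i).2.2, ?_⟩
    show (WithLp.equiv 2 (Fin 2 → ℝ)).symm (fun l => f x (i, l)) = polygonVertex 0 r 0 m (J i x)
    unfold polygonVertex
    congr 1
    funext l
    fin_cases l <;> simp [hfapply]
  · -- the distance estimate
    intro x x'
    exact lt_of_le_of_lt (hmain x x') (lt_of_lt_of_le hkη (min_le_left _ _))
end
end

section
/- A finite indexed family Y = (y_1, …, y_n) of points in ℝ^d is a regular expansion of a family X = (x_1, …, x_n) of points in ℝ^k if and only if there exists a regular simplex Δ = {z_1, …, z_n} (n distinct points with all pairwise distances equal to some α > 0) such that Y is isometric to the family Y' = ((x_1, z_1), …, (x_n, z_n)) in ℝ^k × ℝ^{d'} , i.e., ‖y_i − y_j‖ = ‖(x_i, z_i) − (x_j, z_j)‖ for all i, j. -/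
open scoped Classical

noncomputable section

/-!
Since `‖(x, z) - (x', z')‖² = ‖x - x'‖² + ‖z - z'‖²` in the ℓ² product, `y` is isometric to
`(x i, z i)` for a regular simplex `z` of edge `α` exactly when the squared distances of `y`
exceed those of `x` by `α²`. Conversely, a regular simplex of any edge `α > 0` exists: the
standard basis of `ℝⁿ` scaled by `α / √2`.
-/

theorem Orthonormal.dist_eq_sqrt_two {ι E : Type*} [NormedAddCommGroup E]
    [InnerProductSpace ℝ E] {v : ι → E} (hv : Orthonormal ℝ v) {i j : ι} (hij : i ≠ j) :
    dist (v i) (v j) = √2 := by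
  rw [dist_eq_norm, norm_sub_eq_sqrt_iff_real_inner_eq_zero.2 (hv.2 hij), hv.1 i, hv.1 j]
  norm_num

theorem WithLp.prod_dist_sq_of_L2 {α β : Type*} [SeminormedAddCommGroup α]
    [SeminormedAddCommGroup β] (a a' : α) (b b' : β) :
    dist ((WithLp.equiv 2 (α × β)).symm (a, b)) ((WithLp.equiv 2 (α × β)).symm (a', b')) ^ 2
      = dist a a' ^ 2 + dist b b' ^ 2 := by
  rw [WithLp.prod_dist_eq_of_L2, Real.sq_sqrt (by positivity)]
  rfl

def regularSimplex (ι : Type*) [Fintype ι] [DecidableEq ι] (α : ℝ) : ι → EuclideanSpace ℝ ι :=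
  fun i => (α / √2) • EuclideanSpace.single i 1

section regularSimplex

variable {ι : Type*} [Fintype ι] [DecidableEq ι] {α : ℝ}

theorem dist_regularSimplex (hα : 0 ≤ α) {i j : ι} (hij : i ≠ j) :
    dist (regularSimplex ι α i) (regularSimplex ι α j) = α := by
  have hsingle : dist (EuclideanSpace.single i (1 : ℝ)) (EuclideanSpace.single j 1) = √2 :=
    (EuclideanSpace.orthonormal_single (𝕜 := ℝ) (ι := ι)).dist_eq_sqrt_two hij
  rw [regularSimplex, regularSimplex, dist_smul₀, hsingle, Real.norm_of_nonneg (by positivity),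
    div_mul_cancel₀ _ (by positivity)]

theorem regularSimplex_injective (hα : 0 < α) : Function.Injective (regularSimplex ι α) := by
  intro i j hz
  by_contra hij
  have := dist_regularSimplex hα.le hij
  rw [hz, dist_self] at this
  exact hα.ne this

end regularSimplex

/-- A family `y` in `ℝ^d` is a regular expansion of a family `x` in `ℝ^k` if and only if
there is a regular simplex `z` such that `y` is isometric to the family `(x i, z i)`
inside the (ℓ²) product space `ℝ^k × ℝ^{d'}`. -/
theorem regular_expansion_iff_isometric_to_product_with_regular_simplex
    (n d k : ℕ) (y : Fin n → EuclideanSpace ℝ (Fin d))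
    (x : Fin n → EuclideanSpace ℝ (Fin k)) :
    (∃ α > 0, ∀ i j, i ≠ j →
        dist (y i) (y j) ^ 2 = dist (x i) (x j) ^ 2 + α ^ 2) ↔
    (∃ (d' : ℕ) (z : Fin n → EuclideanSpace ℝ (Fin d')),
      Function.Injective z ∧
      (∃ α > 0, ∀ i j, i ≠ j → dist (z i) (z j) = α) ∧
      ∀ i j, dist (y i) (y j) =
        dist ((WithLp.equiv 2 (EuclideanSpace ℝ (Fin k) × EuclideanSpace ℝ (Fin d'))).symm
                (x i, z i))
             ((WithLp.equiv 2 (EuclideanSpace ℝ (Fin k) × EuclideanSpace ℝ (Fin d'))).symm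
                (x j, z j))) := by
  constructor
  · rintro ⟨α, hα, hy⟩
    refine ⟨n, regularSimplex (Fin n) α, regularSimplex_injective hα,
      ⟨α, hα, fun i j => dist_regularSimplex hα.le⟩, fun i j => ?_⟩
    obtain rfl | hij := eq_or_ne i j
    · simp
    · rw [← sq_eq_sq₀ dist_nonneg dist_nonneg, WithLp.prod_dist_sq_of_L2, hy i j hij,
        dist_regularSimplex hα.le hij]
  · rintro ⟨d', z, -, ⟨α, hα, hz⟩, hyz⟩
    exact ⟨α, hα, fun i j hij => by rw [hyz, WithLp.prod_dist_sq_of_L2, hz i j hij]⟩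
end
end

section
/- Every regular expansion of a finite set is a simplex: if X = (x_1, …, x_n) is a family of points in ℝ^k, α > 0, and Y = {y_1, …, y_n} ⊂ ℝ^d satisfies ‖y_i − y_j‖² = ‖x_i − x_j‖² + α² for all i ≠ j, then the points y_1, …, y_n are affinely independent. -/
open scoped Classical

noncomputable section

/-!
For weights `w` of total mass zero, `∑ᵢ ∑ⱼ wᵢ wⱼ ‖pᵢ - pⱼ‖² = -2 ‖∑ᵢ wᵢ pᵢ‖²` in any Euclidean
space, so this quadratic form is nonpositive, and it vanishes when the `wᵢ` witness an affine
dependence of the `pᵢ`. Adding `c` to every off-diagonal squared distance changes the form by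
`-c ∑ᵢ wᵢ²`. Hence an affine dependence `w` of an expansion `y` of `x` gives
`0 = (form of x) - c ∑ᵢ wᵢ² ≤ -c ∑ᵢ wᵢ²`, which forces `w = 0` when `c > 0`.
-/

namespace EuclideanGeometry

theorem sum_mul_mul_dist_sq_eq_neg_two_mul_norm_sq {ι V P : Type*} [NormedAddCommGroup V]
    [InnerProductSpace ℝ V] [MetricSpace P] [NormedAddTorsor V P] (s : Finset ι) (p : ι → P)
    {w : ι → ℝ} (hw : ∑ i ∈ s, w i = 0) :
    ∑ i ∈ s, ∑ j ∈ s, w i * w j * dist (p i) (p j) ^ 2 = -2 * ‖s.weightedVSub p w‖ ^ 2 := by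
  have h := inner_weightedVSub p hw p hw
  rw [real_inner_self_eq_norm_sq] at h
  simp only [← sq] at h
  linarith

theorem sum_mul_mul_dist_sq_nonpos {ι V P : Type*} [NormedAddCommGroup V]
    [InnerProductSpace ℝ V] [MetricSpace P] [NormedAddTorsor V P] (s : Finset ι) (p : ι → P)
    {w : ι → ℝ} (hw : ∑ i ∈ s, w i = 0) :
    ∑ i ∈ s, ∑ j ∈ s, w i * w j * dist (p i) (p j) ^ 2 ≤ 0 := by
  rw [sum_mul_mul_dist_sq_eq_neg_two_mul_norm_sq s p hw]
  nlinarith [sq_nonneg ‖s.weightedVSub p w‖]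

end EuclideanGeometry

open EuclideanGeometry

theorem sum_mul_mul_dist_sq_eq_of_dist_sq_eq_add {ι P Q : Type*} [PseudoMetricSpace P]
    [PseudoMetricSpace Q] (s : Finset ι) (x : ι → P) (y : ι → Q) (w : ι → ℝ) {c : ℝ}
    (h : ∀ i j, i ≠ j → dist (y i) (y j) ^ 2 = dist (x i) (x j) ^ 2 + c) :
    ∑ i ∈ s, ∑ j ∈ s, w i * w j * dist (y i) (y j) ^ 2 =
      ∑ i ∈ s, ∑ j ∈ s, w i * w j * dist (x i) (x j) ^ 2 +
        c * ((∑ i ∈ s, w i) ^ 2 - ∑ i ∈ s, w i * w i) := by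
  have hterm : ∀ i j, w i * w j * dist (y i) (y j) ^ 2 = w i * w j * dist (x i) (x j) ^ 2 +
      c * (w i * w j) - if i = j then c * (w i * w i) else 0 := by
    intro i j
    by_cases hij : i = j
    · subst hij; simp only [dist_self, if_true]; ring
    · rw [h i j hij, if_neg hij]; ring
  simp only [hterm, Finset.sum_sub_distrib, Finset.sum_add_distrib, Finset.sum_ite_eq,
    ← Finset.mul_sum, Finset.sum_ite_mem, Finset.inter_self]
  rw [← Finset.sum_mul, ← sq]
  ring

theorem affineIndependent_of_dist_sq_eq_dist_sq_add {ι V₁ P₁ V₂ P₂ : Type*} [Fintype ι]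
    [NormedAddCommGroup V₁] [InnerProductSpace ℝ V₁] [MetricSpace P₁] [NormedAddTorsor V₁ P₁]
    [NormedAddCommGroup V₂] [InnerProductSpace ℝ V₂] [MetricSpace P₂] [NormedAddTorsor V₂ P₂]
    (x : ι → P₁) (y : ι → P₂) {c : ℝ} (hc : 0 < c)
    (h : ∀ i j, i ≠ j → dist (y i) (y j) ^ 2 = dist (x i) (x j) ^ 2 + c) :
    AffineIndependent ℝ y := by
  rw [affineIndependent_iff_of_fintype]
  intro w hw hwy
  have hform := sum_mul_mul_dist_sq_eq_of_dist_sq_eq_add Finset.univ x y w h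
  rw [sum_mul_mul_dist_sq_eq_neg_two_mul_norm_sq _ y hw, hwy, hw, norm_zero] at hform
  have hx := sum_mul_mul_dist_sq_nonpos Finset.univ x hw
  have hsq : ∑ i, w i * w i = 0 :=
    le_antisymm (by nlinarith) (Finset.sum_nonneg fun i _ ↦ mul_self_nonneg (w i))
  intro i
  exact (Finset.sum_mul_self_eq_zero_iff _ w).mp hsq i (Finset.mem_univ i)

/-- Every regular expansion of a finite family of points is a simplex, i.e. its
points are affinely independent. -/
theorem regular_expansion_affineIndependent
    (n d k : ℕ) (x : Fin n → EuclideanSpace ℝ (Fin k))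
    (y : Fin n → EuclideanSpace ℝ (Fin d)) (α : ℝ) (hα : 0 < α)
    (hexp : ∀ i j, i ≠ j →
      dist (y i) (y j) ^ 2 = dist (x i) (x j) ^ 2 + α ^ 2) :
    AffineIndependent ℝ y :=
  affineIndependent_of_dist_sq_eq_dist_sq_add x y (pow_pos hα 2) hexp
end
end

section
/- Every simplex is a regular expansion of some other simplex: if Y = {y_1, …, y_n} ⊂ ℝ^d is a finite affinely independent set with n ≥ 2, then there exist k ∈ ℕ, points x_1, …, x_n ∈ ℝ^k whose underlying set is affinely independent, and α > 0 such that ‖y_i − y_j‖² = ‖x_i − x_j‖² + α² for all i ≠ j. -/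
/-!
Centre the points at their centroid, `vᵢ = yᵢ - c`. Affine independence gives `ε > 0` with
`ε ‖w‖² ≤ ‖∑ wᵢ vᵢ‖²` whenever `∑ wᵢ = 0`. Subtracting `ε/2` times the orthogonal projection onto
the zero-sum hyperplane from the Gram matrix of the `vᵢ` keeps it positive semidefinite, so it is
the Gram matrix of points `xᵢ`, and `‖xᵢ - xⱼ‖² = ‖vᵢ - vⱼ‖² - ε`. The form stays positive definite
on the hyperplane, which makes the `xᵢ` affinely independent.
-/

open scoped Classical

noncomputable section

open Finset Matrix

open scoped ComplexOrder in
theorem Matrix.PosSemidef.exists_gram_eq {𝕜 ι : Type*} [RCLike 𝕜] [Fintype ι]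
    {M : Matrix ι ι 𝕜} (hM : M.PosSemidef) : ∃ x : ι → EuclideanSpace 𝕜 ι, gram 𝕜 x = M := by
  open scoped MatrixOrder in
  obtain ⟨B, rfl⟩ := CStarAlgebra.nonneg_iff_eq_star_mul_self.mp hM.nonneg
  refine ⟨fun i => WithLp.toLp 2 fun r => B r i, ?_⟩
  ext i j
  simp [gram_apply, mul_apply, PiLp.inner_apply, mul_comm]

section Real

variable {E ι : Type*} [NormedAddCommGroup E] [InnerProductSpace ℝ E]

theorem dotProduct_gram_mulVec_self [Fintype ι] (v : ι → E) (w : ι → ℝ) :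
    w ⬝ᵥ gram ℝ v *ᵥ w = ‖∑ i, w i • v i‖ ^ 2 := by
  simpa [real_inner_self_eq_norm_sq] using star_dotProduct_gram_mulVec (𝕜 := ℝ) v w w

theorem dist_sq_eq_of_gram_eq {x : ι → E} {M : Matrix ι ι ℝ} (hx : gram ℝ x = M) (i j : ι) :
    dist (x i) (x j) ^ 2 = M i i + M j j - 2 * M i j := by
  subst hx
  rw [dist_eq_norm, norm_sub_sq_real, gram_apply, gram_apply, gram_apply,
    real_inner_self_eq_norm_sq, real_inner_self_eq_norm_sq]
  ring

end Real

theorem AffineIndependent.exists_pos_mul_dotProduct_le_norm_sq {ι F : Type*} [Fintype ι]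
    [NormedAddCommGroup F] [NormedSpace ℝ F] {y : ι → F} (hy : AffineIndependent ℝ y) :
    ∃ ε > 0, ∀ w : ι → ℝ, ∑ i, w i = 0 → ε * (w ⬝ᵥ w) ≤ ‖∑ i, w i • y i‖ ^ 2 := by
  set L := ((Fintype.linearCombination ℝ fun _ => (1 : ℝ)).prod
    (Fintype.linearCombination ℝ y)).comp (WithLp.linearEquiv 2 ℝ (ι → ℝ)).toLinearMap
  have hL : LinearMap.ker L = ⊥ := by
    refine LinearMap.ker_eq_bot'.2 fun w hw => ?_
    simp only [L, LinearMap.comp_apply, LinearMap.prod_apply, Function.prod,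
      Fintype.linearCombination_apply, smul_eq_mul, mul_one, Prod.mk_eq_zero] at hw
    ext i
    exact hy.eq_zero_of_sum_eq_zero hw.1 hw.2 i (mem_univ i)
  obtain ⟨K, hK, hLK⟩ := L.exists_antilipschitzWith hL
  refine ⟨((K : ℝ) ^ 2)⁻¹, by positivity, fun w hw => ?_⟩
  have hbound : ‖WithLp.toLp 2 w‖ ≤ K * ‖∑ i, w i • y i‖ := by
    simpa [L, Fintype.linearCombination_apply, hw] using hLK.le_mul_dist (WithLp.toLp 2 w) 0
  have hnorm : ‖WithLp.toLp 2 w‖ ^ 2 = w ⬝ᵥ w := by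
    rw [EuclideanSpace.real_norm_sq_eq]; simp [dotProduct, sq]
  rw [inv_mul_le_iff₀ (by positivity), ← hnorm, ← mul_pow]
  gcongr

section RegularContraction

variable {E F ι : Type*} [NormedAddCommGroup E] [InnerProductSpace ℝ E]
  [NormedAddCommGroup F] [InnerProductSpace ℝ F] [Fintype ι]

/-- `1 - (card ι)⁻¹ • J` is the orthogonal projection onto the zero-sum hyperplane; it contains
`eᵢ - eⱼ`, so subtracting `β` times it lowers every pairwise squared distance by `2β`. -/
def contractedGram (v : ι → E) (β : ℝ) : Matrix ι ι ℝ :=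
  gram ℝ v - β • (1 - (Fintype.card ι : ℝ)⁻¹ • of fun _ _ => 1)

variable {v : ι → E} {β : ℝ}

theorem dotProduct_contractedGram_mulVec (w : ι → ℝ) :
    w ⬝ᵥ contractedGram v β *ᵥ w =
      ‖∑ i, w i • v i‖ ^ 2 - β * (w ⬝ᵥ w - (∑ i, w i) ^ 2 / Fintype.card ι) := by
  have hJ : w ⬝ᵥ (of fun _ _ => 1 : Matrix ι ι ℝ) *ᵥ w = (∑ i, w i) ^ 2 := by
    simp [mulVec, dotProduct, ← sum_mul, sq]
  simp only [contractedGram, sub_mulVec, smul_mulVec, one_mulVec, dotProduct_sub,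
    dotProduct_smul, dotProduct_gram_mulVec_self, smul_eq_mul, hJ]
  ring

theorem dist_sq_eq_of_gram_eq_contractedGram {x : ι → F} (hx : gram ℝ x = contractedGram v β)
    {i j : ι} (hij : i ≠ j) : dist (x i) (x j) ^ 2 = dist (v i) (v j) ^ 2 - 2 * β := by
  rw [dist_sq_eq_of_gram_eq hx, dist_sq_eq_of_gram_eq rfl]
  simp only [contractedGram, Matrix.sub_apply, Matrix.smul_apply, smul_of, of_apply, one_apply,
    gram_apply, real_inner_self_eq_norm_sq, Pi.smul_apply, smul_eq_mul, hij, if_true, if_false]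
  ring

theorem posSemidef_contractedGram (hv : ∑ i, v i = 0)
    (hβ : ∀ w : ι → ℝ, ∑ i, w i = 0 → β * (w ⬝ᵥ w) ≤ ‖∑ i, w i • v i‖ ^ 2) :
    (contractedGram v β).PosSemidef := by
  rcases isEmpty_or_nonempty ι with hι | hι
  · rw [Subsingleton.elim (contractedGram v β) 0]
    exact .zero
  have hn : (Fintype.card ι : ℝ) ≠ 0 := by simp
  refine .of_dotProduct_mulVec_nonneg ?_ fun w => ?_
  · ext i j
    simp [contractedGram, real_inner_comm, one_apply, eq_comm]
  set h : ι → ℝ := fun i => w i - (∑ j, w j) / Fintype.card ι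
  have h_sum : ∑ i, h i = 0 := by
    simp only [h, sum_sub_distrib, sum_const, card_univ, nsmul_eq_mul]
    field_simp
    ring
  have h_comb : ∑ i, h i • v i = ∑ i, w i • v i := by
    simp [h, sub_smul, sum_sub_distrib, ← smul_sum, hv]
  have h_dot : h ⬝ᵥ h = w ⬝ᵥ w - (∑ i, w i) ^ 2 / Fintype.card ι := by
    simp only [h, dotProduct, mul_sub, sub_mul, sum_sub_distrib, ← mul_sum, ← sum_mul, sum_const,
      card_univ, nsmul_eq_mul]
    field_simp
    ring
  rw [star_trivial, dotProduct_contractedGram_mulVec, ← h_comb, ← h_dot, sub_nonneg]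
  exact hβ h h_sum

theorem affineIndependent_of_gram_eq_contractedGram {x : ι → F}
    (hx : gram ℝ x = contractedGram v β)
    (hβ : ∀ w : ι → ℝ, ∑ i, w i = 0 → w ≠ 0 → β * (w ⬝ᵥ w) < ‖∑ i, w i • v i‖ ^ 2) :
    AffineIndependent ℝ x := by
  rw [affineIndependent_iff_of_fintype]
  intro w hw hwx
  rw [univ.weightedVSub_eq_linear_combination hw] at hwx
  by_contra! hne
  have hsq := dotProduct_gram_mulVec_self x w
  rw [hx, dotProduct_contractedGram_mulVec, hwx, hw, norm_zero, zero_pow two_ne_zero, zero_div,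
    sub_zero] at hsq
  have := hβ w hw fun h => hne.elim fun i hi => hi (congrFun h i)
  linarith

end RegularContraction

def IsRegularExpansion {ι E F : Type*} [Dist E] [Dist F] (y : ι → E) (x : ι → F) : Prop :=
  ∃ α > 0, ∀ i j, i ≠ j → dist (y i) (y j) ^ 2 = dist (x i) (x j) ^ 2 + α ^ 2

theorem AffineIndependent.exists_isRegularExpansion {ι E : Type*} [Fintype ι]
    [NormedAddCommGroup E] [InnerProductSpace ℝ E] {y : ι → E} (hy : AffineIndependent ℝ y) :
    ∃ x : ι → EuclideanSpace ℝ ι, AffineIndependent ℝ x ∧ IsRegularExpansion y x := by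
  set v : ι → E := fun i => y i - (Fintype.card ι : ℝ)⁻¹ • ∑ j, y j
  have hv : ∑ i, v i = 0 := by
    rcases isEmpty_or_nonempty ι with hι | hι
    · simp
    · simp only [v, sum_sub_distrib, sum_const, card_univ]
      rw [← Nat.cast_smul_eq_nsmul ℝ, smul_smul, mul_inv_cancel₀ (by simp), one_smul, sub_self]
  have hvy : ∀ w : ι → ℝ, ∑ i, w i = 0 → ∑ i, w i • v i = ∑ i, w i • y i := fun w hw => by
    simp [v, smul_sub, sum_sub_distrib, ← sum_smul, hw]
  obtain ⟨ε, hε, hεy⟩ := hy.exists_pos_mul_dotProduct_le_norm_sq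
  have hεv : ∀ w : ι → ℝ, ∑ i, w i = 0 → ε / 2 * (w ⬝ᵥ w) ≤ ‖∑ i, w i • v i‖ ^ 2 := by
    intro w hw
    rw [hvy w hw]
    have hnonneg : 0 ≤ w ⬝ᵥ w := by simpa using dotProduct_star_self_nonneg w
    exact (mul_le_mul_of_nonneg_right (half_le_self hε.le) hnonneg).trans (hεy w hw)
  obtain ⟨x, hx⟩ := (posSemidef_contractedGram hv hεv).exists_gram_eq
  refine ⟨x, affineIndependent_of_gram_eq_contractedGram hx fun w hw hw0 => ?_,
    √ε, Real.sqrt_pos.2 hε, fun i j hij => ?_⟩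
  · have hpos : 0 < w ⬝ᵥ w := by simpa using dotProduct_star_self_pos_iff.2 hw0
    rw [hvy w hw]
    exact (mul_lt_mul_of_pos_right (half_lt_self hε) hpos).trans_le (hεy w hw)
  · rw [dist_sq_eq_of_gram_eq_contractedGram hx hij, Real.sq_sqrt hε.le]
    simp only [v, dist_sub_right]
    ring

theorem simplex_is_regular_expansion_of_simplex_general
    (n d : ℕ) (y : Fin n → EuclideanSpace ℝ (Fin d))
    (hy : AffineIndependent ℝ y) :
    ∃ (k : ℕ) (x : Fin n → EuclideanSpace ℝ (Fin k)) (α : ℝ),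
      AffineIndependent ℝ ((↑) : Set.range x → EuclideanSpace ℝ (Fin k)) ∧
      0 < α ∧
      ∀ i j, i ≠ j →
        dist (y i) (y j) ^ 2 = dist (x i) (x j) ^ 2 + α ^ 2 := by
  obtain ⟨x, hx, α, hα, hxy⟩ := hy.exists_isRegularExpansion
  exact ⟨n, x, α, hx.range, hα, hxy⟩

/-- Every simplex is a regular expansion of some other simplex: for any affinely
independent family `y` of `n ≥ 2` points there are points `x i` (whose underlying set
is affinely independent) and `α > 0` with `‖y i - y j‖² = ‖x i - x j‖² + α²`. -/
theorem simplex_is_regular_expansion_of_simplex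
    (n d : ℕ) (hn : 2 ≤ n) (y : Fin n → EuclideanSpace ℝ (Fin d))
    (hy : AffineIndependent ℝ y) :
    ∃ (k : ℕ) (x : Fin n → EuclideanSpace ℝ (Fin k)) (α : ℝ),
      AffineIndependent ℝ ((↑) : Set.range x → EuclideanSpace ℝ (Fin k)) ∧
      0 < α ∧
      ∀ i j, i ≠ j →
        dist (y i) (y j) ^ 2 = dist (x i) (x j) ^ 2 + α ^ 2 :=
  simplex_is_regular_expansion_of_simplex_general n d y hy
end
end

section
/- Let b > 0, and for each pair 1 ≤ i < j ≤ n with b_{ij} > 0 let b_{ij} ≥ 0 be given. Let Δ ⊂ ℝ^{n−1} be a regular simplex with n vertices and side length b, and for each pair i < j with b_{ij} > 0 let Δ_{ij} ⊂ ℝ^{n−2} be a regular simplex with n−1 vertices and side length b_{ij}. Then in the Cartesian product X = Δ × ∏_{i<j, b_{ij}>0} Δ_{ij} there exist points z_1, …, z_n such that the projection of (z_1, …, z_n) onto the Δ-coordinate is a bijection onto the n vertices of Δ, and for every s ≠ t one has ‖z_s − z_t‖² = b² + (∑_{1 ≤ i < j ≤ n} b_{ij}²) − b_{st}²; moreover the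 set {z_1, …, z_n} is affinely independent. -/
open scoped Classical

noncomputable section

/-! Put `z_s = (v_s, (w_{ij}(c_{ij}(s)))_{i<j})`, where `c_{ij} : Fin n → Fin (n - 1)` identifies
`i` with `j` and is otherwise injective. For `s ≠ t` the points `z_s`, `z_t` then sit at distinct
vertices of every factor `Δ_{ij}` except `Δ_{st}`, which gives the distance formula, and they are
affinely independent because their projections to `Δ` are the vertices of a regular simplex. -/

open Finset EuclideanGeometry

theorem affineIndependent_of_dist_eq {V P ι : Type*} [NormedAddCommGroup V]
    [InnerProductSpace ℝ V] [MetricSpace P] [NormedAddTorsor V P] {p : ι → P} {b : ℝ}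
    (hb : b ≠ 0) (hp : ∀ s t, s ≠ t → dist (p s) (p t) = b) : AffineIndependent ℝ p := by
  classical
  intro S w hw hvsub i hi
  have hrow : ∀ s ∈ S, ∑ t ∈ S, w s * w t * (dist (p s) (p t) * dist (p s) (p t)) =
      -(b ^ 2 * w s ^ 2) := by
    intro s hs
    have hterm : ∀ t, w s * w t * (dist (p s) (p t) * dist (p s) (p t)) =
        b ^ 2 * w s * w t - if s = t then b ^ 2 * w s * w t else 0 := by
      intro t
      by_cases hst : s = t
      · simp [hst]
      · rw [hp s t hst, if_neg hst]; ring
    simp only [hterm, sum_sub_distrib, ← mul_sum, hw, sum_ite_eq, if_pos hs]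
    ring
  -- `0 = ‖∑ w_s p_s‖² = -(1/2) ∑_{s,t} w_s w_t d(p_s, p_t)² = (b²/2) ∑ w_s²`, as `∑ w_s = 0`.
  have hsum : ∑ s ∈ S, w s ^ 2 = 0 := by
    have h := inner_weightedVSub p hw p hw
    rw [hvsub, inner_zero_left, sum_congr rfl hrow, sum_neg_distrib, ← mul_sum] at h
    exact (mul_eq_zero.mp (by linarith)).resolve_left (pow_ne_zero 2 hb)
  exact pow_eq_zero_iff two_ne_zero |>.mp <|
    (sum_eq_zero_iff_of_nonneg fun s _ => sq_nonneg (w s)).mp hsum i hi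

theorem WithLp.dist_sq_prod_piLp {ι E : Type*} [Fintype ι] {G : ι → Type*}
    [SeminormedAddCommGroup E] [∀ i, SeminormedAddCommGroup (G i)]
    (x y : WithLp 2 (E × PiLp 2 G)) :
    dist x y ^ 2 = dist x.fst y.fst ^ 2 + ∑ i, dist (x.snd i) (y.snd i) ^ 2 := by
  rw [WithLp.prod_dist_eq_of_L2, Real.sq_sqrt (by positivity), PiLp.dist_eq_of_L2,
    Real.sq_sqrt (by positivity)]

theorem Fintype.sum_subtype_of_ne_zero {α M : Type*} [Fintype α] [AddCommMonoid M]
    {P : α → Prop} [DecidablePred P] (f : α → M) (h : ∀ a, f a ≠ 0 → P a) :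
    ∑ a : Subtype P, f a = ∑ a, f a := by
  rw [← Finset.sum_subtype (univ.filter P) (by simp), sum_filter_of_ne fun a _ => h a]

theorem Fintype.sum_ite_lt_eq_sum_Ioi {α M : Type*} [Fintype α] [LinearOrder α]
    [LocallyFiniteOrderTop α] [AddCommMonoid M] (f : α × α → M) :
    ∑ q : α × α, (if q.1 < q.2 then f q else 0) = ∑ i, ∑ j ∈ Ioi i, f (i, j) := by
  rw [Fintype.sum_prod_type]
  simp only [← sum_filter, filter_lt_eq_Ioi]

def Fin.collapsePair {n : ℕ} (i j : Fin n) (hij : i < j) (s : Fin n) : Fin (n - 1) :=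
  ⟨if s = j then i else if s < j then s else s - 1, by
    have := s.isLt; have := j.isLt; have : (i : ℕ) < j := hij
    split_ifs <;> omega⟩

theorem Fin.collapsePair_eq_collapsePair_iff {n : ℕ} {i j : Fin n} (hij : i < j) {s t : Fin n}
    (hst : s ≠ t) :
    collapsePair i j hij s = collapsePair i j hij t ↔ (min s t, max s t) = (i, j) := by
  have := s.isLt; have := t.isLt; have : (i : ℕ) < j := hij
  have : (s : ℕ) ≠ t := Fin.val_ne_of_ne hst
  simp only [collapsePair, Fin.ext_iff, Prod.ext_iff, Fin.coe_min, Fin.coe_max]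
  split_ifs <;> omega

/-- Only the simplex indexed by the pair `{s, t}` sees `s` and `t` at the same vertex. -/
theorem sum_dist_sq_collapsePair {X : Type*} [PseudoMetricSpace X] {n : ℕ}
    {bij : Fin n → Fin n → ℝ} (hbij : ∀ i j, i < j → 0 ≤ bij i j)
    {w : Fin n → Fin n → Fin (n - 1) → X}
    (hw : ∀ i j, i < j → 0 < bij i j → ∀ k l, k ≠ l → dist (w i j k) (w i j l) = bij i j)
    {s t : Fin n} (hst : s ≠ t) :
    ∑ p : {p : Fin n × Fin n // p.1 < p.2 ∧ 0 < bij p.1 p.2},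
        dist (w p.1.1 p.1.2 (Fin.collapsePair p.1.1 p.1.2 p.2.1 s))
          (w p.1.1 p.1.2 (Fin.collapsePair p.1.1 p.1.2 p.2.1 t)) ^ 2 =
      ∑ i, ∑ j ∈ Ioi i, bij i j ^ 2 - bij (min s t) (max s t) ^ 2 := by
  set f : Fin n × Fin n → ℝ := fun q => if q.1 < q.2 then bij q.1 q.2 ^ 2 else 0 with hf
  set e := (min s t, max s t)
  have hterm : ∀ p : {p : Fin n × Fin n // p.1 < p.2 ∧ 0 < bij p.1 p.2},
      dist (w p.1.1 p.1.2 (Fin.collapsePair p.1.1 p.1.2 p.2.1 s))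
          (w p.1.1 p.1.2 (Fin.collapsePair p.1.1 p.1.2 p.2.1 t)) ^ 2 =
        f p - if (p : Fin n × Fin n) = e then f p else 0 := by
    intro p
    have hcollapse := Fin.collapsePair_eq_collapsePair_iff p.2.1 hst
    by_cases hp : (p : Fin n × Fin n) = e
    · rw [if_pos hp, hcollapse.mpr hp.symm, dist_self]
      ring
    · rw [if_neg hp, hw _ _ p.2.1 p.2.2 _ _ (mt hcollapse.mp (Ne.symm hp)), sub_zero]
      exact (if_pos p.2.1).symm
  have hsupport : ∀ q, (f q - if q = e then f q else 0) ≠ 0 → q.1 < q.2 ∧ 0 < bij q.1 q.2 := by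
    intro q hq
    by_cases hlt : q.1 < q.2
    · refine ⟨hlt, (hbij _ _ hlt).lt_of_ne' fun h0 => hq ?_⟩
      simp [hf, h0]
    · simp [hf, hlt] at hq
  rw [sum_congr rfl fun p _ => hterm p, Fintype.sum_subtype_of_ne_zero _ hsupport,
    sum_sub_distrib, Fintype.sum_ite_eq']
  simp only [hf]
  rw [Fintype.sum_ite_lt_eq_sum_Ioi, if_pos (min_lt_max.mpr hst)]

theorem points_in_product_of_simplices_general
    (n : ℕ) (b : ℝ) (hb : 0 < b) (bij : Fin n → Fin n → ℝ)
    (hbij : ∀ i j : Fin n, i < j → 0 ≤ bij i j)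
    (v : Fin n → EuclideanSpace ℝ (Fin (n - 1)))
    (hv : ∀ s t, s ≠ t → dist (v s) (v t) = b)
    (w : Fin n → Fin n → Fin (n - 1) → EuclideanSpace ℝ (Fin (n - 2)))
    (hw : ∀ i j : Fin n, i < j → 0 < bij i j →
      ∀ k l, k ≠ l → dist (w i j k) (w i j l) = bij i j) :
    ∃ z : Fin n →
        WithLp 2 (EuclideanSpace ℝ (Fin (n - 1)) ×
          PiLp 2 fun _ : {p : Fin n × Fin n // p.1 < p.2 ∧ 0 < bij p.1 p.2} =>
            EuclideanSpace ℝ (Fin (n - 2))),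
      (∃ σ : Equiv.Perm (Fin n), ∀ s,
        ((WithLp.equiv 2 _) (z s)).1 = v (σ s)) ∧
      (∀ s, ∀ p : {p : Fin n × Fin n // p.1 < p.2 ∧ 0 < bij p.1 p.2},
        ((WithLp.equiv 2 _) (z s)).2 p ∈ Set.range (w p.1.1 p.1.2)) ∧
      (∀ s t, s ≠ t →
        dist (z s) (z t) ^ 2 =
          b ^ 2 + (∑ i : Fin n, ∑ j ∈ Finset.Ioi i, bij i j ^ 2)
            - bij (min s t) (max s t) ^ 2) ∧
      AffineIndependent ℝ z := by
  refine ⟨fun s => WithLp.toLp 2 (v s, WithLp.toLp 2 fun p =>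
      w p.1.1 p.1.2 (Fin.collapsePair p.1.1 p.1.2 p.2.1 s)),
    ⟨Equiv.refl _, fun s => rfl⟩, fun s p => ⟨_, rfl⟩, fun s t hst => ?_,
    (affineIndependent_of_dist_eq hb.ne' hv).of_comp (WithLp.fstₗ 2 ℝ _ _).toAffineMap⟩
  rw [WithLp.dist_sq_prod_piLp, add_sub_assoc, ← hv s t hst,
    ← sum_dist_sq_collapsePair hbij hw hst]
  rfl

/-- The Frankl–Pach–Reiher–Rödl construction: in the product of a regular simplex `Δ`
(with `n` vertices, side `b`) with the regular simplices `Δ_{ij}` (with `n-1` vertices,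
side `b_{ij}`, for the pairs `i < j` with `b_{ij} > 0`) one can choose affinely
independent points `z_1, …, z_n` projecting bijectively onto the vertices of `Δ` and
satisfying `‖z_s - z_t‖² = b² + ∑_{i<j} b_{ij}² - b_{st}²` for all `s ≠ t`. -/
theorem points_in_product_of_simplices
    (n : ℕ) (b : ℝ) (hb : 0 < b) (bij : Fin n → Fin n → ℝ)
    (hbij : ∀ i j : Fin n, i < j → 0 ≤ bij i j)
    (v : Fin n → EuclideanSpace ℝ (Fin (n - 1)))
    (hvinj : Function.Injective v)
    (hv : ∀ s t, s ≠ t → dist (v s) (v t) = b)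
    (w : Fin n → Fin n → Fin (n - 1) → EuclideanSpace ℝ (Fin (n - 2)))
    (hwinj : ∀ i j : Fin n, i < j → 0 < bij i j → Function.Injective (w i j))
    (hw : ∀ i j : Fin n, i < j → 0 < bij i j →
      ∀ k l, k ≠ l → dist (w i j k) (w i j l) = bij i j) :
    ∃ z : Fin n →
        WithLp 2 (EuclideanSpace ℝ (Fin (n - 1)) ×
          PiLp 2 fun _ : {p : Fin n × Fin n // p.1 < p.2 ∧ 0 < bij p.1 p.2} =>
            EuclideanSpace ℝ (Fin (n - 2))),
      (∃ σ : Equiv.Perm (Fin n), ∀ s,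
        ((WithLp.equiv 2 _) (z s)).1 = v (σ s)) ∧
      (∀ s, ∀ p : {p : Fin n × Fin n // p.1 < p.2 ∧ 0 < bij p.1 p.2},
        ((WithLp.equiv 2 _) (z s)).2 p ∈ Set.range (w p.1.1 p.1.2)) ∧
      (∀ s t, s ≠ t →
        dist (z s) (z t) ^ 2 =
          b ^ 2 + (∑ i : Fin n, ∑ j ∈ Finset.Ioi i, bij i j ^ 2)
            - bij (min s t) (max s t) ^ 2) ∧
      AffineIndependent ℝ z :=
  points_in_product_of_simplices_general n b hb bij hbij v hv w hw
end
end
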